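/- arXiv:2604.09848 — 5 statements merged into one kernel-verified Lean document; each statement's English description precedes it below -/
import Mathlib

section
/- Suppose there exists a constant $C_c > 0$ such that for all $v \in L^2(B)$, $$\tfrac{1}{2}\int_B\int_B G(x-y)(v(x)-v(y))^2\,dx\,dy + \int_B a(x)v(x)^2\,dx \geq C_c \|v\|_{L^2(B)}^2,$$ where $a(x) = \int_A J(x-y)\,dy$. Then for every $u \in L^2(A)$ there exists a unique $v \in L^2(B)$ satisfying, for a.e. $x \in B$, $$0 = \int_B G(x-y)(v(y)-v(x))\,dy + \int_A J(x-y)(u(y)-v(x))\,dy,$$ and moreover $\|v\|_{L^2(B)} \leq \frac{1}{C_c}\left(\int_B\int_A J(x-y)^2\,dy\,dx\right)^{1/2}\|u\|_{L^2(A)}$. -/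
/-!
With `b x = ∫_B G(x-y) dy + ∫_A J(x-y) dy` and the convolution operators
`K_H w x = ∫ H(x-y) w(y) dy`, the equation says `T v = K_J u` in `L²(B)`, where
`T v = b v - K_G v`. Convolution by a bounded kernel over a finite measure is Hilbert–Schmidt,
with `‖K_J u‖ ≤ ‖J(x-y)‖_{L²(B×A)} ‖u‖` by Cauchy–Schwarz, so `T` is bounded. Since `G` is even,
swapping `x` and `y` gives `⟪T v, v⟫ = ∫_B a v² + ½ ∬ G(x-y) (v x - v y)²`, so the hypothesis says
that `T` is coercive with constant `C_c`. By Lax–Milgram `T` is invertible, and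
`C_c ‖v‖ ≤ ‖T v‖ = ‖K_J u‖` gives the estimate.
-/

open MeasureTheory RealInnerProductSpace

section L2
variable {α : Type*} [MeasurableSpace α] {μ : Measure α}

lemma MeasureTheory.L2.real_inner_eq_integral (V W : Lp ℝ 2 μ) :
    ⟪V, W⟫ = ∫ x, V x * W x ∂μ := by
  simp [L2.inner_def, mul_comm]

lemma MeasureTheory.L2.norm_sq_eq_integral_sq (W : Lp ℝ 2 μ) : ‖W‖ ^ 2 = ∫ x, W x ^ 2 ∂μ := by
  rw [← real_inner_self_eq_norm_sq, L2.real_inner_eq_integral]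
  simp only [sq]

lemma MeasureTheory.L2.norm_eq_sqrt_integral_sq (W : Lp ℝ 2 μ) :
    ‖W‖ = √(∫ x, W x ^ 2 ∂μ) := by
  rw [← L2.norm_sq_eq_integral_sq, Real.sqrt_sq (norm_nonneg W)]

lemma MeasureTheory.MemLp.norm_toLp_eq_sqrt_integral_sq {f : α → ℝ} (hf : MemLp f 2 μ) :
    ‖hf.toLp f‖ = √(∫ x, f x ^ 2 ∂μ) := by
  rw [← Real.sqrt_sq (norm_nonneg _), L2.norm_sq_eq_integral_sq]
  congr 1
  exact integral_congr_ae (hf.coeFn_toLp.fun_comp (· ^ 2))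

lemma sq_integral_mul_le {φ ψ : α → ℝ} (hφ : MemLp φ 2 μ) (hψ : MemLp ψ 2 μ) :
    (∫ x, φ x * ψ x ∂μ) ^ 2 ≤ (∫ x, φ x ^ 2 ∂μ) * ∫ x, ψ x ^ 2 ∂μ := by
  have h := real_inner_mul_inner_self_le (hφ.toLp φ) (hψ.toLp ψ)
  simp only [L2.real_inner_eq_integral, ← sq] at h
  convert h using 2 <;> refine integral_congr_ae ?_ <;>
    filter_upwards [hφ.coeFn_toLp, hψ.coeFn_toLp] with x hφx hψx <;> simp only [hφx, hψx]

end L2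

section Coercive
variable {V : Type*} [NormedAddCommGroup V] [InnerProductSpace ℝ V] {T : V →L[ℝ] V} {c : ℝ}

lemma ContinuousLinearMap.mul_norm_le_norm_of_coercive (hT : ∀ v, c * ‖v‖ ^ 2 ≤ ⟪T v, v⟫)
    (v : V) : c * ‖v‖ ≤ ‖T v‖ := by
  rcases (norm_nonneg v).eq_or_lt' with h | h
  · simp [h]
  · refine le_of_mul_le_mul_right ?_ h
    calc c * ‖v‖ * ‖v‖ = c * ‖v‖ ^ 2 := by ring
      _ ≤ ⟪T v, v⟫ := hT v
      _ ≤ ‖T v‖ * ‖v‖ := real_inner_le_norm _ _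

lemma ContinuousLinearMap.bijective_of_coercive [CompleteSpace V] (hc : 0 < c)
    (hT : ∀ v, c * ‖v‖ ^ 2 ≤ ⟪T v, v⟫) : Function.Bijective T := by
  have hB : IsCoercive (innerSL ℝ ∘L T) :=
    ⟨c, hc, fun v => (mul_assoc c _ _).trans_le (sq ‖v‖ ▸ hT v)⟩
  convert hB.continuousLinearEquivOfBilin.bijective
  ext v
  exact ext_inner_right ℝ fun w => (hB.continuousLinearEquivOfBilin_apply v w).symm

end Coercive

namespace BoundedContinuousFunction

variable {E : Type*} [NormedAddCommGroup E] [MeasurableSpace E] {μ ν : Measure E} (H : E →ᵇ ℝ)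
  {w : E → ℝ}

lemma abs_integral_kernel_mul_le (hw : Integrable w μ) (x : E) :
    |∫ y, H (x - y) * w y ∂μ| ≤ ‖H‖ * ∫ y, |w y| ∂μ := by
  rw [← integral_const_mul, ← Real.norm_eq_abs]
  exact norm_integral_le_of_norm_le (hw.abs.const_mul _) (ae_of_all _ fun y => by
    rw [norm_mul, Real.norm_eq_abs (w y)]
    exact mul_le_mul_of_nonneg_right (H.norm_coe_le_norm _) (abs_nonneg _))

lemma integral_kernel_mul_congr {w' : E → ℝ} (h : w =ᵐ[μ] w') (x : E) :
    ∫ y, H (x - y) * w y ∂μ = ∫ y, H (x - y) * w' y ∂μ :=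
  integral_congr_ae (h.mono fun y hy => congrArg (H (x - y) * ·) hy)

lemma integral_prod_kernel_mul_snd [SFinite μ] (hH : ∀ z, H (-z) = H z) (f : E → ℝ) :
    ∫ p, H (p.1 - p.2) * f p.2 ∂μ.prod μ = ∫ p, H (p.1 - p.2) * f p.1 ∂μ.prod μ := by
  rw [← integral_prod_swap]
  refine integral_congr_ae (ae_of_all _ fun p => ?_)
  simp only [Prod.fst_swap, Prod.snd_swap]
  rw [← neg_sub, hH]

variable [OpensMeasurableSpace E]

lemma integrable_kernel_mul (hw : Integrable w μ) (x : E) :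
    Integrable (fun y => H (x - y) * w y) μ :=
  hw.bdd_mul (H.continuous.comp (continuous_const.sub continuous_id)).aestronglyMeasurable
    (ae_of_all _ fun _ => H.norm_coe_le_norm _)

lemma continuous_integral_kernel_mul (hw : Integrable w μ) :
    Continuous fun x => ∫ y, H (x - y) * w y ∂μ :=
  continuous_of_dominated (fun x => (H.integrable_kernel_mul hw x).aestronglyMeasurable)
    (fun x => ae_of_all _ fun y => by
      rw [norm_mul]; exact mul_le_mul_of_nonneg_right (H.norm_coe_le_norm _) (norm_nonneg _))
    (hw.norm.const_mul ‖H‖)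
    (ae_of_all _ fun _ => (H.continuous.comp (continuous_id.sub continuous_const)).mul
      continuous_const)

lemma memLp_integral_kernel_mul [IsFiniteMeasure ν] (hw : Integrable w μ) (p : ENNReal) :
    MemLp (fun x => ∫ y, H (x - y) * w y ∂μ) p ν :=
  .of_bound (H.continuous_integral_kernel_mul hw).aestronglyMeasurable _
    (ae_of_all _ (H.abs_integral_kernel_mul_le hw))

lemma integral_sq_integral_kernel_mul_le [IsFiniteMeasure μ] [IsFiniteMeasure ν]
    (hw : MemLp w 2 μ) :
    ∫ x, (∫ y, H (x - y) * w y ∂μ) ^ 2 ∂ν ≤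
      (∫ x, ∫ y, H (x - y) ^ 2 ∂μ ∂ν) * ∫ y, w y ^ 2 ∂μ := by
  have hrow (x : E) : MemLp (fun y => H (x - y)) 2 μ :=
    .of_bound (H.continuous.comp (continuous_const.sub continuous_id)).aestronglyMeasurable ‖H‖
      (ae_of_all _ fun _ => H.norm_coe_le_norm _)
  have hrows : Integrable (fun x => ∫ y, H (x - y) ^ 2 ∂μ) ν := by
    simpa [sq] using ((H * H).memLp_integral_kernel_mul (μ := μ) (ν := ν)
      (integrable_const (1 : ℝ)) 1).integrable le_rfl
  rw [← integral_mul_const]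
  exact integral_mono (H.memLp_integral_kernel_mul (hw.integrable one_le_two) 2).integrable_sq
    (hrows.mul_const _) fun x => sq_integral_mul_le (hrow x) hw

variable (ν) in
noncomputable def mulOperator (b : E →ᵇ ℝ) :
    Lp ℝ 2 ν →L[ℝ] Lp ℝ 2 ν :=
  (ContinuousLinearMap.mul ℝ ℝ).holderL ν ⊤ 2 2 ((memLp_top_of_bound
    b.continuous.aestronglyMeasurable ‖b‖ (ae_of_all _ b.norm_coe_le_norm)).toLp b)

lemma coeFn_mulOperator (b : E →ᵇ ℝ) (W : Lp ℝ 2 ν) :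
    b.mulOperator ν W =ᵐ[ν] fun x => b x * W x := by
  filter_upwards [(ContinuousLinearMap.mul ℝ ℝ).coeFn_holder (p := ⊤) (r := 2) _ W,
    MemLp.coeFn_toLp (f := ⇑b) (p := ⊤) (μ := ν) _] with x h1 h2
  rw [← h2]; exact h1

variable (μ ν) [IsFiniteMeasure μ] [IsFiniteMeasure ν]

noncomputable def convOperator : Lp ℝ 2 μ →L[ℝ] Lp ℝ 2 ν :=
  LinearMap.mkContinuous
    { toFun := fun w => (H.memLp_integral_kernel_mul ((Lp.memLp w).integrable one_le_two) 2).toLp _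
      map_add' := fun v w => by
        rw [← MemLp.toLp_add]
        refine MemLp.toLp_congr _ _ (ae_of_all _ fun x => ?_)
        dsimp only [Pi.add_apply]
        rw [H.integral_kernel_mul_congr (Lp.coeFn_add v w), ← integral_add
          (H.integrable_kernel_mul ((Lp.memLp v).integrable one_le_two) x)
          (H.integrable_kernel_mul ((Lp.memLp w).integrable one_le_two) x)]
        simp only [Pi.add_apply, mul_add]
      map_smul' := fun c w => by
        rw [RingHom.id_apply, ← MemLp.toLp_const_smul]
        refine MemLp.toLp_congr _ _ (ae_of_all _ fun x => ?_)
        dsimp only [Pi.smul_apply]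
        rw [H.integral_kernel_mul_congr (Lp.coeFn_smul c w), smul_eq_mul, ← integral_const_mul]
        simp only [Pi.smul_apply, smul_eq_mul, mul_left_comm] }
    √(∫ x, ∫ y, H (x - y) ^ 2 ∂μ ∂ν) fun w => by
      rw [LinearMap.coe_mk, AddHom.coe_mk, MemLp.norm_toLp_eq_sqrt_integral_sq,
        L2.norm_eq_sqrt_integral_sq, ← Real.sqrt_mul (integral_nonneg fun _ =>
          integral_nonneg fun _ => sq_nonneg _)]
      exact Real.sqrt_le_sqrt (H.integral_sq_integral_kernel_mul_le (Lp.memLp w))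

lemma coeFn_convOperator (w : Lp ℝ 2 μ) :
    H.convOperator μ ν w =ᵐ[ν] fun x => ∫ y, H (x - y) * w y ∂μ :=
  (H.memLp_integral_kernel_mul ((Lp.memLp w).integrable one_le_two) 2).coeFn_toLp

lemma coeFn_convOperator_toLp (hw : MemLp w 2 μ) :
    H.convOperator μ ν (hw.toLp w) =ᵐ[ν] fun x => ∫ y, H (x - y) * w y ∂μ :=
  (H.coeFn_convOperator μ ν _).trans
    (ae_of_all _ (H.integral_kernel_mul_congr hw.coeFn_toLp))

lemma norm_convOperator_apply_le (w : Lp ℝ 2 μ) :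
    ‖H.convOperator μ ν w‖ ≤ √(∫ x, ∫ y, H (x - y) ^ 2 ∂μ ∂ν) * ‖w‖ :=
  (H.convOperator μ ν).le_of_opNorm_le (LinearMap.mkContinuous_norm_le _ (Real.sqrt_nonneg _) _) w

noncomputable def convMeasure : E →ᵇ ℝ :=
  .ofNormedAddCommGroup (fun x => ∫ y, H (x - y) ∂μ)
    (by simpa using H.continuous_integral_kernel_mul (integrable_const (1 : ℝ)) (μ := μ))
    (‖H‖ * μ.real Set.univ)
    fun x => by simpa using H.abs_integral_kernel_mul_le (integrable_const (1 : ℝ)) x (μ := μ)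

lemma convMeasure_apply (x : E) : H.convMeasure μ x = ∫ y, H (x - y) ∂μ := rfl

variable {μ} in
lemma integral_kernel_mul_sub (hw : Integrable w μ) (x : E) (c : ℝ) :
    ∫ y, H (x - y) * (w y - c) ∂μ = ∫ y, H (x - y) * w y ∂μ - H.convMeasure μ x * c := by
  simp only [mul_sub]
  rw [integral_sub (H.integrable_kernel_mul hw x)
    (H.integrable_kernel_mul (integrable_const c) x), integral_mul_const, convMeasure_apply]

variable {μ} [SecondCountableTopology E] in
lemma integral_integral_kernel_mul_sub_sq (hH : ∀ z, H (-z) = H z) (hw : MemLp w 2 μ) :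
    ∫ x, ∫ y, H (x - y) * (w x - w y) ^ 2 ∂μ ∂μ =
      2 * (∫ x, H.convMeasure μ x * w x ^ 2 ∂μ - ∫ x, (∫ y, H (x - y) * w y ∂μ) * w x ∂μ) := by
  have hw1 : Integrable w μ := hw.integrable one_le_two
  have hK : AEStronglyMeasurable (fun p : E × E => H (p.1 - p.2)) (μ.prod μ) :=
    (H.continuous.comp (continuous_fst.sub continuous_snd)).aestronglyMeasurable
  have hkernel {F : E × E → ℝ} (hF : Integrable F (μ.prod μ)) :
      Integrable (fun p => H (p.1 - p.2) * F p) (μ.prod μ) :=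
    hF.bdd_mul hK (ae_of_all _ fun _ => H.norm_coe_le_norm _)
  have hx2 : Integrable (fun p : E × E => H (p.1 - p.2) * w p.1 ^ 2) (μ.prod μ) :=
    hkernel (hw.integrable_sq.comp_fst μ)
  have hy2 : Integrable (fun p : E × E => H (p.1 - p.2) * w p.2 ^ 2) (μ.prod μ) :=
    hkernel (hw.integrable_sq.comp_snd μ)
  have hxy : Integrable (fun p : E × E => H (p.1 - p.2) * (w p.1 * w p.2)) (μ.prod μ) :=
    hkernel (hw1.mul_prod hw1)
  have hx2y2 : Integrable (fun p : E × E =>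
      H (p.1 - p.2) * w p.1 ^ 2 + H (p.1 - p.2) * w p.2 ^ 2) (μ.prod μ) := hx2.add hy2
  have hx2_eq : ∫ p, H (p.1 - p.2) * w p.1 ^ 2 ∂μ.prod μ = ∫ x, H.convMeasure μ x * w x ^ 2 ∂μ := by
    simp only [integral_prod _ hx2, integral_mul_const, convMeasure_apply]
  have hxy_eq : ∫ p, H (p.1 - p.2) * (w p.1 * w p.2) ∂μ.prod μ =
      ∫ x, (∫ y, H (x - y) * w y ∂μ) * w x ∂μ := by
    rw [integral_prod _ hxy]
    refine integral_congr_ae (ae_of_all _ fun x => ?_)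
    dsimp only
    rw [← integral_mul_const]
    exact integral_congr_ae (ae_of_all _ fun y => by ring)
  calc ∫ x, ∫ y, H (x - y) * (w x - w y) ^ 2 ∂μ ∂μ
      = ∫ x, ∫ y, (H (x - y) * w x ^ 2 + H (x - y) * w y ^ 2
          - 2 * (H (x - y) * (w x * w y))) ∂μ ∂μ := by
        congr 1; ext x; congr 1; ext y; ring
    _ = ∫ p, (H (p.1 - p.2) * w p.1 ^ 2 + H (p.1 - p.2) * w p.2 ^ 2
          - 2 * (H (p.1 - p.2) * (w p.1 * w p.2))) ∂μ.prod μ :=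
        (integral_prod _ (hx2y2.sub (hxy.const_mul 2))).symm
    _ = _ := by
        rw [integral_sub hx2y2 (hxy.const_mul 2), integral_add hx2 hy2, integral_const_mul,
          H.integral_prod_kernel_mul_snd hH (w · ^ 2), hx2_eq, hxy_eq]
        ring

end BoundedContinuousFunction

section Nonlocal
open BoundedContinuousFunction

variable {E : Type*} [NormedAddCommGroup E] [MeasurableSpace E] [OpensMeasurableSpace E]
  (μA μB : Measure E) [IsFiniteMeasure μA] [IsFiniteMeasure μB] (J G : E →ᵇ ℝ)

noncomputable def nonlocalOperator : Lp ℝ 2 μB →L[ℝ] Lp ℝ 2 μB :=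
  (G.convMeasure μB + J.convMeasure μA).mulOperator μB - G.convOperator μB μB

lemma coeFn_nonlocalOperator (W : Lp ℝ 2 μB) :
    nonlocalOperator μA μB J G W =ᵐ[μB] fun x =>
      (G.convMeasure μB x + J.convMeasure μA x) * W x - ∫ y, G (x - y) * W y ∂μB := by
  filter_upwards [Lp.coeFn_sub ((G.convMeasure μB + J.convMeasure μA).mulOperator μB W)
    (G.convOperator μB μB W), (G.convMeasure μB + J.convMeasure μA).coeFn_mulOperator W,
    G.coeFn_convOperator μB μB W] with x h h1 h2
  rw [nonlocalOperator, _root_.sub_apply, h, Pi.sub_apply, h1, h2,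
    BoundedContinuousFunction.add_apply]

lemma coeFn_nonlocalOperator_toLp {v : E → ℝ} (hv : MemLp v 2 μB) :
    nonlocalOperator μA μB J G (hv.toLp v) =ᵐ[μB] fun x =>
      (G.convMeasure μB x + J.convMeasure μA x) * v x - ∫ y, G (x - y) * v y ∂μB := by
  filter_upwards [coeFn_nonlocalOperator μA μB J G (hv.toLp v), hv.coeFn_toLp] with x h1 h2
  rw [h1, h2, G.integral_kernel_mul_congr hv.coeFn_toLp]

variable {μA μB J G}

lemma ae_nonlocal_eq_zero_iff {u v : E → ℝ} (hu : MemLp u 2 μA) (hv : MemLp v 2 μB) :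
    (∀ᵐ x ∂μB, 0 = (∫ y, G (x - y) * (v y - v x) ∂μB) + ∫ y, J (x - y) * (u y - v x) ∂μA) ↔
      nonlocalOperator μA μB J G (hv.toLp v) = J.convOperator μA μB (hu.toLp u) := by
  have hres (x : E) : (∫ y, G (x - y) * (v y - v x) ∂μB) + ∫ y, J (x - y) * (u y - v x) ∂μA =
      (∫ y, J (x - y) * u y ∂μA) -
        ((G.convMeasure μB x + J.convMeasure μA x) * v x - ∫ y, G (x - y) * v y ∂μB) := by
    rw [G.integral_kernel_mul_sub (hv.integrable one_le_two),
      J.integral_kernel_mul_sub (hu.integrable one_le_two)]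
    ring
  rw [Lp.ext_iff]
  refine Filter.eventually_congr ?_
  filter_upwards [coeFn_nonlocalOperator_toLp μA μB J G hv, J.coeFn_convOperator_toLp μA μB hu]
    with x hT hK
  rw [hres, hT, hK, eq_comm, sub_eq_zero]
  exact eq_comm

variable [SecondCountableTopology E]

lemma coercive_nonlocalOperator (hG : ∀ z, G (-z) = G z) {c : ℝ}
    (hcoer : ∀ w : E → ℝ, MemLp w 2 μB →
      c * ∫ x, (w x) ^ 2 ∂μB ≤
        (1 / 2) * (∫ x, ∫ y, G (x - y) * (w x - w y) ^ 2 ∂μB ∂μB)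
          + ∫ x, (∫ y, J (x - y) ∂μA) * (w x) ^ 2 ∂μB)
    (W : Lp ℝ 2 μB) : c * ‖W‖ ^ 2 ≤ ⟪nonlocalOperator μA μB J G W, W⟫ := by
  have hW := Lp.memLp W
  have hW1 := hW.integrable one_le_two
  have hmul (b : E →ᵇ ℝ) : Integrable (fun x => b x * W x ^ 2) μB :=
    hW.integrable_sq.bdd_mul b.continuous.aestronglyMeasurable (ae_of_all _ b.norm_coe_le_norm)
  have hK : Integrable (fun x => (∫ y, G (x - y) * W y ∂μB) * W x) μB :=
    hW1.bdd_mul (G.continuous_integral_kernel_mul hW1).aestronglyMeasurable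
      (ae_of_all _ (G.abs_integral_kernel_mul_le hW1))
  have hGK : Integrable (fun x => G.convMeasure μB x * W x ^ 2
      - (∫ y, G (x - y) * W y ∂μB) * W x) μB := (hmul _).sub hK
  calc c * ‖W‖ ^ 2 = c * ∫ x, W x ^ 2 ∂μB := by rw [L2.norm_sq_eq_integral_sq]
    _ ≤ (1 / 2) * (∫ x, ∫ y, G (x - y) * (W x - W y) ^ 2 ∂μB ∂μB)
          + ∫ x, J.convMeasure μA x * W x ^ 2 ∂μB := hcoer W hW
    _ = ∫ x, J.convMeasure μA x * W x ^ 2 ∂μB + (∫ x, G.convMeasure μB x * W x ^ 2 ∂μB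
          - ∫ x, (∫ y, G (x - y) * W y ∂μB) * W x ∂μB) := by
        rw [G.integral_integral_kernel_mul_sub_sq hG hW]; ring
    _ = ∫ x, ((G.convMeasure μB x + J.convMeasure μA x) * W x
          - ∫ y, G (x - y) * W y ∂μB) * W x ∂μB := by
        rw [← integral_sub (hmul _) hK, ← integral_add (hmul _) hGK]
        exact integral_congr_ae (ae_of_all _ fun x => by ring)
    _ = ⟪nonlocalOperator μA μB J G W, W⟫ := by
        rw [L2.real_inner_eq_integral]
        refine integral_congr_ae ?_
        filter_upwards [coeFn_nonlocalOperator μA μB J G W] with x hx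
        rw [hx]

theorem exists_unique_memLp_nonlocal_eq_zero (hG : ∀ z, G (-z) = G z) {c : ℝ} (hc : 0 < c)
    (hcoer : ∀ w : E → ℝ, MemLp w 2 μB →
      c * ∫ x, (w x) ^ 2 ∂μB ≤
        (1 / 2) * (∫ x, ∫ y, G (x - y) * (w x - w y) ^ 2 ∂μB ∂μB)
          + ∫ x, (∫ y, J (x - y) ∂μA) * (w x) ^ 2 ∂μB)
    {u : E → ℝ} (hu : MemLp u 2 μA) :
    ∃ v : E → ℝ,
      MemLp v 2 μB ∧
      (∀ᵐ x ∂μB,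
        0 = (∫ y, G (x - y) * (v y - v x) ∂μB) + ∫ y, J (x - y) * (u y - v x) ∂μA) ∧
      √(∫ x, (v x) ^ 2 ∂μB) ≤
        (1 / c) * √(∫ x, ∫ y, (J (x - y)) ^ 2 ∂μA ∂μB) * √(∫ x, (u x) ^ 2 ∂μA) ∧
      (∀ v' : E → ℝ, MemLp v' 2 μB →
        (∀ᵐ x ∂μB,
          0 = (∫ y, G (x - y) * (v' y - v' x) ∂μB) + ∫ y, J (x - y) * (u y - v' x) ∂μA) →
        v' =ᵐ[μB] v) := by
  set T := nonlocalOperator μA μB J G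
  have hT := coercive_nonlocalOperator hG hcoer
  obtain ⟨V, hV⟩ := (T.bijective_of_coercive hc hT).2 (J.convOperator μA μB (hu.toLp u))
  have hsolves {v : E → ℝ} (hv : MemLp v 2 μB) :
      (∀ᵐ x ∂μB, 0 = (∫ y, G (x - y) * (v y - v x) ∂μB) + ∫ y, J (x - y) * (u y - v x) ∂μA) ↔
        hv.toLp v = V := by
    rw [ae_nonlocal_eq_zero_iff hu hv, ← hV, (T.bijective_of_coercive hc hT).1.eq_iff]
  refine ⟨V, Lp.memLp V, (hsolves (Lp.memLp V)).2 (Lp.toLp_coeFn V _), ?_,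
    fun v' hv' h => (hsolves hv').1 h ▸ hv'.coeFn_toLp.symm⟩
  rw [← L2.norm_eq_sqrt_integral_sq, ← hu.norm_toLp_eq_sqrt_integral_sq, mul_assoc,
    one_div, le_inv_mul_iff₀ hc]
  calc c * ‖V‖ ≤ ‖T V‖ := T.mul_norm_le_norm_of_coercive hT V
    _ ≤ _ := hV ▸ J.norm_convOperator_apply_le μA μB _

end Nonlocal

theorem stmt_2_general {N : ℕ} (A B : Set (EuclideanSpace ℝ (Fin N)))
    (hAb : Bornology.IsBounded A) (hBb : Bornology.IsBounded B)
    (J G : EuclideanSpace ℝ (Fin N) → ℝ)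
    (hJc : Continuous J) (hGc : Continuous G)
    (hJ0 : ∀ z, 0 ≤ J z) (hG0 : ∀ z, 0 ≤ G z)
    (hJbd : ∃ C, ∀ z, J z ≤ C) (hGbd : ∃ C, ∀ z, G z ≤ C)
    (hGs : ∀ z, G (-z) = G z)
    (Cc : ℝ) (hCc : 0 < Cc)
    (hcoer : ∀ w : EuclideanSpace ℝ (Fin N) → ℝ, MemLp w 2 (volume.restrict B) →
      Cc * ∫ x in B, (w x) ^ 2 ≤
        (1 / 2) * (∫ x in B, ∫ y in B, G (x - y) * (w x - w y) ^ 2)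
          + ∫ x in B, (∫ y in A, J (x - y)) * (w x) ^ 2)
    (u : EuclideanSpace ℝ (Fin N) → ℝ) (hu : MemLp u 2 (volume.restrict A)) :
    ∃ v : EuclideanSpace ℝ (Fin N) → ℝ,
      MemLp v 2 (volume.restrict B) ∧
      (∀ᵐ x ∂(volume.restrict B),
        0 = (∫ y in B, G (x - y) * (v y - v x)) + ∫ y in A, J (x - y) * (u y - v x)) ∧
      Real.sqrt (∫ x in B, (v x) ^ 2) ≤
        (1 / Cc) * Real.sqrt (∫ x in B, ∫ y in A, (J (x - y)) ^ 2)
          * Real.sqrt (∫ x in A, (u x) ^ 2) ∧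
      (∀ v' : EuclideanSpace ℝ (Fin N) → ℝ, MemLp v' 2 (volume.restrict B) →
        (∀ᵐ x ∂(volume.restrict B),
          0 = (∫ y in B, G (x - y) * (v' y - v' x)) + ∫ y in A, J (x - y) * (u y - v' x)) →
        v' =ᵐ[volume.restrict B] v) := by
  have : IsFiniteMeasure (volume.restrict A) := isFiniteMeasure_restrict.2 hAb.measure_lt_top.ne
  have : IsFiniteMeasure (volume.restrict B) := isFiniteMeasure_restrict.2 hBb.measure_lt_top.ne
  obtain ⟨CJ, hCJ⟩ := hJbd
  obtain ⟨CG, hCG⟩ := hGbd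
  exact exists_unique_memLp_nonlocal_eq_zero
    (J := .ofNormedAddCommGroup J hJc CJ fun z => (Real.norm_of_nonneg (hJ0 z)).trans_le (hCJ z))
    (G := .ofNormedAddCommGroup G hGc CG fun z => (Real.norm_of_nonneg (hG0 z)).trans_le (hCG z))
    hGs hCc hcoer hu

/-- Existence and uniqueness (via Lax–Milgram) for the nonlocal elliptic equation:
under the coercivity hypothesis with constant `Cc > 0`, for every `u ∈ L²(A)` there is a
unique `v ∈ L²(B)` solving `0 = ∫_B G(x-y)(v(y)-v(x)) dy + ∫_A J(x-y)(u(y)-v(x)) dy` a.e.,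
together with the estimate `‖v‖_{L²(B)} ≤ (1/Cc) (∬ J²)^{1/2} ‖u‖_{L²(A)}`. -/
theorem stmt_2 {N : ℕ} (A B : Set (EuclideanSpace ℝ (Fin N)))
    (hAm : MeasurableSet A) (hBm : MeasurableSet B)
    (hAb : Bornology.IsBounded A) (hBb : Bornology.IsBounded B)
    (J G : EuclideanSpace ℝ (Fin N) → ℝ)
    (hJc : Continuous J) (hGc : Continuous G)
    (hJ0 : ∀ z, 0 ≤ J z) (hG0 : ∀ z, 0 ≤ G z)
    (hJbd : ∃ C, ∀ z, J z ≤ C) (hGbd : ∃ C, ∀ z, G z ≤ C)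
    (hJs : ∀ z, J (-z) = J z) (hGs : ∀ z, G (-z) = G z)
    (Cc : ℝ) (hCc : 0 < Cc)
    (hcoer : ∀ w : EuclideanSpace ℝ (Fin N) → ℝ, MemLp w 2 (volume.restrict B) →
      Cc * ∫ x in B, (w x) ^ 2 ≤
        (1 / 2) * (∫ x in B, ∫ y in B, G (x - y) * (w x - w y) ^ 2)
          + ∫ x in B, (∫ y in A, J (x - y)) * (w x) ^ 2)
    (u : EuclideanSpace ℝ (Fin N) → ℝ) (hu : MemLp u 2 (volume.restrict A)) :
    ∃ v : EuclideanSpace ℝ (Fin N) → ℝ,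
      MemLp v 2 (volume.restrict B) ∧
      (∀ᵐ x ∂(volume.restrict B),
        0 = (∫ y in B, G (x - y) * (v y - v x)) + ∫ y in A, J (x - y) * (u y - v x)) ∧
      Real.sqrt (∫ x in B, (v x) ^ 2) ≤
        (1 / Cc) * Real.sqrt (∫ x in B, ∫ y in A, (J (x - y)) ^ 2)
          * Real.sqrt (∫ x in A, (u x) ^ 2) ∧
      (∀ v' : EuclideanSpace ℝ (Fin N) → ℝ, MemLp v' 2 (volume.restrict B) →
        (∀ᵐ x ∂(volume.restrict B),
          0 = (∫ y in B, G (x - y) * (v' y - v' x)) + ∫ y in A, J (x - y) * (u y - v' x)) →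
        v' =ᵐ[volume.restrict B] v) :=
  stmt_2_general A B hAb hBb J G hJc hGc hJ0 hG0 hJbd hGbd hGs Cc hCc hcoer u hu
end

section
/- Let $B$ be a bounded connected open subset of $\mathbb{R}^N$, $G$ a nonnegative continuous symmetric kernel with $G(0) > 0$, and $a(x) = \int_A J(x-y)\,dy$ where $J$ is nonnegative continuous with $\operatorname{dist}(A,B)$ smaller than the radius of the support of $J$ (so $a \not\equiv 0$ on $B$). Then there exists a constant $C_c > 0$ such that for every $v \in L^2(B)$, $$\frac{1}{2}\int_B\int_B G(x-y)(v(x)-v(y))^2\,dx\,dy + \int_B a(x)v(x)^2\,dx \geq C_c\|v\|_{L^2(B)}^2.$$ -/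
open MeasureTheory Metric Set Filter Topology
open scoped ENNReal

/-!
Write `Q(v)` (`nonlocalEnergy`) for `∬_{B×B} G(x-y)(v x - v y)² + ∫_B a v²` computed in `ℝ≥0∞`,
and call `S` controlled (`MassBoundedByEnergyOn`) if `∫_S v² ≤ C · Q(v)` for a finite `C`.
Near a point where `a > 0` the potential term alone controls `v²`. If `G ≥ δ > 0` on the ball of
radius `r` and `V` is a controlled set of positive measure, then any `U` within distance `r` of
`V` is controlled: average `v(x)² ≤ (2/δ) G(x-y)(v x - v y)² + 2 v(y)²` over `y ∈ V`. Hence the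
set of points near which `B` is controlled is open and relatively closed in `B`, so it contains
`B` (connectedness) and then `closure B`; compactness of `closure B` covers `B` by finitely many
controlled pieces. Boundedness of `G` and `a` on `B` makes `Q` finite on `L²(B)`, which turns the
`ℝ≥0∞` estimate into the real one.
-/

section

variable {E : Type*} [NormedAddCommGroup E] [MeasurableSpace E]

noncomputable def nonlocalEnergy (μ : Measure E) (B : Set E) (G a v : E → ℝ) : ℝ≥0∞ :=
  (∫⁻ x in B, ∫⁻ y in B, ENNReal.ofReal (G (x - y) * (v x - v y) ^ 2) ∂μ ∂μ)
    + ∫⁻ x in B, ENNReal.ofReal (a x * v x ^ 2) ∂μ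

def MassBoundedByEnergyOn (μ : Measure E) (B : Set E) (G a : E → ℝ) (S : Set E) : Prop :=
  ∃ C : ℝ≥0∞, C ≠ ∞ ∧ ∀ v : E → ℝ, Measurable v →
    ∫⁻ x in S, ENNReal.ofReal (v x ^ 2) ∂μ ≤ C * nonlocalEnergy μ B G a v

theorem sq_le_two_div_mul_sq_sub_add {δ g s t : ℝ} (hδ : 0 < δ) (hg : δ ≤ g) :
    s ^ 2 ≤ 2 / δ * (g * (s - t) ^ 2) + 2 * t ^ 2 := by
  have h : 2 * (s - t) ^ 2 ≤ 2 / δ * (g * (s - t) ^ 2) := by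
    rw [div_mul_eq_mul_div, le_div_iff₀ hδ]
    nlinarith [sq_nonneg (s - t)]
  nlinarith [sq_nonneg (s - 2 * t)]

namespace MassBoundedByEnergyOn

variable {μ : Measure E} {B S T : Set E} {G a : E → ℝ}

theorem empty : MassBoundedByEnergyOn μ B G a ∅ :=
  ⟨0, ENNReal.zero_ne_top, fun v _ => by simp⟩

theorem mono (hST : S ⊆ T) (hT : MassBoundedByEnergyOn μ B G a T) :
    MassBoundedByEnergyOn μ B G a S := by
  obtain ⟨C, hC, hTv⟩ := hT
  exact ⟨C, hC, fun v hv => (lintegral_mono_set hST).trans (hTv v hv)⟩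

theorem union (hS : MassBoundedByEnergyOn μ B G a S) (hT : MassBoundedByEnergyOn μ B G a T) :
    MassBoundedByEnergyOn μ B G a (S ∪ T) := by
  obtain ⟨C, hC, hSv⟩ := hS
  obtain ⟨C', hC', hTv⟩ := hT
  refine ⟨C + C', ENNReal.add_ne_top.2 ⟨hC, hC'⟩, fun v hv => ?_⟩
  calc ∫⁻ x in S ∪ T, ENNReal.ofReal (v x ^ 2) ∂μ
      ≤ (∫⁻ x in S, ENNReal.ofReal (v x ^ 2) ∂μ) + ∫⁻ x in T, ENNReal.ofReal (v x ^ 2) ∂μ :=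
        lintegral_union_le _ S T
    _ ≤ C * nonlocalEnergy μ B G a v + C' * nonlocalEnergy μ B G a v :=
        add_le_add (hSv v hv) (hTv v hv)
    _ = (C + C') * nonlocalEnergy μ B G a v := (add_mul _ _ _).symm

theorem of_le_potential {α : ℝ} (hα : 0 < α) (hS : MeasurableSet S) (hSB : S ⊆ B)
    (haS : ∀ x ∈ S, α ≤ a x) : MassBoundedByEnergyOn μ B G a S := by
  have hα' : ENNReal.ofReal α ≠ 0 := (ENNReal.ofReal_pos.2 hα).ne'
  refine ⟨(ENNReal.ofReal α)⁻¹, ENNReal.inv_ne_top.2 hα', fun v _ => ?_⟩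
  calc ∫⁻ x in S, ENNReal.ofReal (v x ^ 2) ∂μ
      ≤ ∫⁻ x in S, (ENNReal.ofReal α)⁻¹ * ENNReal.ofReal (a x * v x ^ 2) ∂μ := by
        refine setLIntegral_mono' hS fun x hx => ?_
        rw [← ENNReal.inv_mul_cancel_left hα' ENNReal.ofReal_ne_top (b := ENNReal.ofReal (v x ^ 2)),
          ← ENNReal.ofReal_mul hα.le]
        gcongr
        exact haS x hx
    _ ≤ (ENNReal.ofReal α)⁻¹ * ∫⁻ x in B, ENNReal.ofReal (a x * v x ^ 2) ∂μ := by
        rw [lintegral_const_mul' _ _ (ENNReal.inv_ne_top.2 hα')]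
        exact mul_le_mul_right (lintegral_mono_set hSB) _
    _ ≤ (ENNReal.ofReal α)⁻¹ * nonlocalEnergy μ B G a v := mul_le_mul_right le_add_self _

theorem of_le_kernel {U V : Set E} {δ : ℝ} (hδ : 0 < δ) (hU : MeasurableSet U)
    (hV : MeasurableSet V) (hUB : U ⊆ B) (hVB : V ⊆ B) (hUμ : μ U ≠ ∞) (hV0 : μ V ≠ 0)
    (hVμ : μ V ≠ ∞) (hG : ∀ x ∈ U, ∀ y ∈ V, δ ≤ G (x - y))
    (hVbd : MassBoundedByEnergyOn μ B G a V) : MassBoundedByEnergyOn μ B G a U := by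
  obtain ⟨C, hC, hVv⟩ := hVbd
  set c := ENNReal.ofReal (2 / δ)
  refine ⟨(μ V)⁻¹ * (c + 2 * μ U * C), by finiteness, fun v hv => ?_⟩
  set n : E → ℝ≥0∞ := fun x => ENNReal.ofReal (v x ^ 2)
  set g : E → E → ℝ≥0∞ := fun x y => ENNReal.ofReal (G (x - y) * (v x - v y) ^ 2)
  have hn : Measurable n := (hv.pow_const 2).ennreal_ofReal
  have hpt : ∀ x ∈ U, ∀ y ∈ V, n x ≤ c * g x y + 2 * n y := fun x hx y hy => by
    have hG0 : 0 ≤ G (x - y) := hδ.le.trans (hG x hx y hy)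
    calc n x ≤ ENNReal.ofReal (2 / δ * (G (x - y) * (v x - v y) ^ 2) + 2 * v y ^ 2) :=
          ENNReal.ofReal_le_ofReal (sq_le_two_div_mul_sq_sub_add hδ (hG x hx y hy))
      _ = c * g x y + 2 * n y := by
          rw [ENNReal.ofReal_add (by positivity) (by positivity),
            ENNReal.ofReal_mul (by positivity),
            ENNReal.ofReal_mul zero_le_two, ENNReal.ofReal_ofNat]
  have hinner : ∀ x ∈ U, μ V * n x ≤ c * (∫⁻ y in V, g x y ∂μ) + 2 * ∫⁻ y in V, n y ∂μ := by
    intro x hx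
    calc μ V * n x = ∫⁻ _ in V, n x ∂μ := by rw [setLIntegral_const, mul_comm]
      _ ≤ ∫⁻ y in V, (c * g x y + 2 * n y) ∂μ := setLIntegral_mono' hV (hpt x hx)
      _ = c * (∫⁻ y in V, g x y ∂μ) + 2 * ∫⁻ y in V, n y ∂μ := by
          rw [lintegral_add_right _ (hn.const_mul 2),
            lintegral_const_mul' _ _ ENNReal.ofReal_ne_top,
            lintegral_const_mul' _ _ ENNReal.ofNat_ne_top]
  have houter : μ V * ∫⁻ x in U, n x ∂μ
      ≤ c * (∫⁻ x in B, ∫⁻ y in B, g x y ∂μ ∂μ) + 2 * μ U * ∫⁻ y in V, n y ∂μ := by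
    calc μ V * ∫⁻ x in U, n x ∂μ = ∫⁻ x in U, μ V * n x ∂μ := (lintegral_const_mul' _ _ hVμ).symm
      _ ≤ ∫⁻ x in U, (c * (∫⁻ y in V, g x y ∂μ) + 2 * ∫⁻ y in V, n y ∂μ) ∂μ :=
          setLIntegral_mono' hU hinner
      _ = c * (∫⁻ x in U, ∫⁻ y in V, g x y ∂μ ∂μ) + 2 * μ U * ∫⁻ y in V, n y ∂μ := by
          rw [lintegral_add_right _ measurable_const,
            lintegral_const_mul' _ _ ENNReal.ofReal_ne_top,
            setLIntegral_const]
          ring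
      _ ≤ c * (∫⁻ x in B, ∫⁻ y in B, g x y ∂μ ∂μ) + 2 * μ U * ∫⁻ y in V, n y ∂μ := by
          gcongr c * ?_ + _
          exact (lintegral_mono_set hUB).trans (lintegral_mono fun x => lintegral_mono_set hVB)
  calc ∫⁻ x in U, n x ∂μ = (μ V)⁻¹ * (μ V * ∫⁻ x in U, n x ∂μ) :=
        (ENNReal.inv_mul_cancel_left hV0 hVμ).symm
    _ ≤ (μ V)⁻¹ * (c * nonlocalEnergy μ B G a v + 2 * μ U * (C * nonlocalEnergy μ B G a v)) := by
        gcongr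
        exact houter.trans (add_le_add (mul_le_mul_right le_self_add _)
          (mul_le_mul_right (hVv v hv) _))
    _ = (μ V)⁻¹ * (c + 2 * μ U * C) * nonlocalEnergy μ B G a v := by ring

end MassBoundedByEnergyOn

section Propagation

variable [ProperSpace E] [OpensMeasurableSpace E] {μ : Measure E} [μ.IsOpenPosMeasure]
  [IsFiniteMeasureOnCompacts μ] {B : Set E} {G a : E → ℝ}

theorem MassBoundedByEnergyOn.exists_mem_nhds_of_dist_lt {r δ : ℝ} (hδ : 0 < δ)
    (hGr : ∀ z, ‖z‖ < r → δ ≤ G z) (hBo : IsOpen B) (hBb : Bornology.IsBounded B) {x y : E}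
    (hy : y ∈ B) {s : Set E} (hs : s ∈ 𝓝 y) (hBs : MassBoundedByEnergyOn μ B G a (B ∩ s))
    (hxy : dist x y < r / 3) : ∃ t ∈ 𝓝 x, MassBoundedByEnergyOn μ B G a (B ∩ t) := by
  obtain ⟨ε, hε, hεs⟩ := Metric.mem_nhds_iff.1 hs
  have hr : 0 < r / 3 := dist_nonneg.trans_lt hxy
  set ρ := min ε (r / 3)
  have hUo : IsOpen (B ∩ ball x (r / 3)) := hBo.inter isOpen_ball
  have hVo : IsOpen (B ∩ ball y ρ) := hBo.inter isOpen_ball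
  have hV0 : μ (B ∩ ball y ρ) ≠ 0 := (hVo.measure_pos μ ⟨y, hy, mem_ball_self (lt_min hε hr)⟩).ne'
  refine ⟨ball x (r / 3), ball_mem_nhds x hr, ?_⟩
  refine hBs.mono (inter_subset_inter_right _ ((ball_subset_ball (min_le_left _ _)).trans hεs))
    |>.of_le_kernel hδ hUo.measurableSet hVo.measurableSet inter_subset_left inter_subset_left
    (hBb.subset inter_subset_left).measure_lt_top.ne hV0
    (hBb.subset inter_subset_left).measure_lt_top.ne fun x' hx' y' hy' => hGr _ ?_
  rw [← dist_eq_norm]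
  calc dist x' y' ≤ dist x' x + dist x y + dist y y' := dist_triangle4 _ _ _ _
    _ < r / 3 + r / 3 + r / 3 := by
        gcongr
        · exact hx'.2
        · exact (mem_ball'.1 hy'.2).trans_le (min_le_right _ _)
    _ = r := by ring

theorem massBoundedByEnergyOn_of_isPreconnected (hBo : IsOpen B) (hBc : IsPreconnected B)
    (hBb : Bornology.IsBounded B) (hG : ContinuousAt G 0) (hG0 : 0 < G 0) {x₀ : E}
    (ha : ContinuousAt a x₀) (hx₀ : x₀ ∈ B) (hax₀ : 0 < a x₀) :
    MassBoundedByEnergyOn μ B G a B := by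
  obtain ⟨r, hr, hGr⟩ : ∃ r > 0, ∀ z : E, ‖z‖ < r → G 0 / 2 ≤ G z := by
    obtain ⟨r, hr, h⟩ := Metric.continuousAt_iff.1 hG (G 0 / 2) (half_pos hG0)
    refine ⟨r, hr, fun z hz => ?_⟩
    have := abs_lt.1 (h (by rwa [dist_zero_right]))
    linarith
  set W := {x | ∃ s ∈ 𝓝 x, MassBoundedByEnergyOn μ B G a (B ∩ s)}
  have hWo : IsOpen W := isOpen_iff_mem_nhds.2 fun x ⟨s, hs, hBs⟩ =>
    (eventually_mem_nhds_iff.2 hs).mono fun _ hy => ⟨s, hy, hBs⟩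
  have hspread : ∀ x, ∀ y ∈ B ∩ W, dist x y < r / 3 → x ∈ W := fun x y ⟨hy, s, hs, hBs⟩ hxy =>
    hBs.exists_mem_nhds_of_dist_lt (half_pos hG0) hGr hBo hBb hy hs hxy
  have hx₀W : x₀ ∈ W := by
    obtain ⟨ε, hε, haε⟩ :=
      Metric.eventually_nhds_iff.1 (ha.eventually (lt_mem_nhds (half_lt_self hax₀)))
    exact ⟨ball x₀ ε, ball_mem_nhds _ hε, .of_le_potential (half_pos hax₀)
      (hBo.inter isOpen_ball).measurableSet inter_subset_left fun x hx => (haε hx.2).le⟩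
  have hBW : B ⊆ W := hBc.subset_of_closure_inter_subset hWo ⟨x₀, hx₀, hx₀W⟩ fun x ⟨hxW, hxB⟩ => by
    obtain ⟨y, ⟨hyx, hyB⟩, hyW⟩ := mem_closure_iff_nhds.1 hxW _
      (inter_mem (ball_mem_nhds x (by positivity : 0 < r / 3)) (hBo.mem_nhds hxB))
    exact hspread x y ⟨hyB, hyW⟩ (mem_ball'.1 hyx)
  have hcl : closure B ⊆ W := fun x hx => by
    obtain ⟨y, hyB, hxy⟩ := Metric.mem_closure_iff.1 hx (r / 3) (by positivity)
    exact hspread x y ⟨hyB, hBW hyB⟩ hxy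
  have := hBb.isCompact_closure.induction_on
    (p := fun S => MassBoundedByEnergyOn μ B G a (B ∩ S)) (by simpa using .empty)
    (fun s t hst ht => ht.mono (inter_subset_inter_right _ hst))
    (fun s t hs ht => by rw [inter_union_distrib_left]; exact hs.union ht)
    fun x hx => (hcl hx).imp fun s ⟨hs, hBs⟩ => ⟨mem_nhdsWithin_of_mem_nhds hs, hBs⟩
  rwa [inter_eq_left.2 subset_closure] at this

end Propagation

theorem continuous_setIntegral_comp_sub [ProperSpace E] [OpensMeasurableSpace E] {μ : Measure E}
    [IsFiniteMeasureOnCompacts μ] {A : Set E} (hA : Bornology.IsBounded A) {J : E → ℝ}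
    (hJ : Continuous J) : Continuous fun x => ∫ y in A, J (x - y) ∂μ := by
  refine continuous_iff_continuousAt.2 fun x₀ => ?_
  obtain ⟨M, hM⟩ :=
    ((isCompact_closedBall x₀ 1).prod hA.isCompact_closure).exists_bound_of_continuousOn
      (hJ.comp (continuous_fst.sub continuous_snd)).continuousOn
  refine continuousAt_of_dominated (bound := fun _ => M)
    (.of_forall fun x => (hJ.comp (continuous_const.sub continuous_id)).aestronglyMeasurable)
    ?_ (integrableOn_const hA.measure_lt_top.ne)
    (.of_forall fun y => (hJ.comp (continuous_id.sub continuous_const)).continuousAt)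
  filter_upwards [closedBall_mem_nhds x₀ one_pos] with x hx
  exact ae_restrict_of_ae_restrict_of_subset subset_closure <|
    (ae_restrict_mem isClosed_closure.measurableSet).mono fun y hy => hM (x, y) ⟨hx, hy⟩

section Energy

variable {μ : Measure E} {B : Set E} {G a v : E → ℝ}

theorem lintegral_kernel_energy_le {M : ℝ} (hB : MeasurableSet B) (hv : Measurable v)
    (hG0 : ∀ z, 0 ≤ G z) (hGM : ∀ x ∈ B, ∀ y ∈ B, G (x - y) ≤ M) :
    ∫⁻ x in B, ∫⁻ y in B, ENNReal.ofReal (G (x - y) * (v x - v y) ^ 2) ∂μ ∂μ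
      ≤ 4 * ENNReal.ofReal M * μ B * ∫⁻ x in B, ENNReal.ofReal (v x ^ 2) ∂μ := by
  set n : E → ℝ≥0∞ := fun x => ENNReal.ofReal (v x ^ 2)
  have hn : Measurable n := (hv.pow_const 2).ennreal_ofReal
  have hpt : ∀ x ∈ B, ∀ y ∈ B, ENNReal.ofReal (G (x - y) * (v x - v y) ^ 2)
      ≤ ENNReal.ofReal M * (2 * n x + 2 * n y) := fun x hx y hy => by
    calc ENNReal.ofReal (G (x - y) * (v x - v y) ^ 2)
        ≤ ENNReal.ofReal (M * (2 * v x ^ 2 + 2 * v y ^ 2)) := by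
          refine ENNReal.ofReal_le_ofReal ?_
          have hG := hGM x hx y hy
          nlinarith [hG0 (x - y), sq_nonneg (v x + v y),
            mul_le_mul_of_nonneg_right hG (sq_nonneg (v x - v y))]
      _ = ENNReal.ofReal M * (2 * n x + 2 * n y) := by
          rw [ENNReal.ofReal_mul' (by positivity),
            ENNReal.ofReal_add (by positivity) (by positivity),
            ENNReal.ofReal_mul zero_le_two, ENNReal.ofReal_mul zero_le_two, ENNReal.ofReal_ofNat]
  calc ∫⁻ x in B, ∫⁻ y in B, ENNReal.ofReal (G (x - y) * (v x - v y) ^ 2) ∂μ ∂μ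
      ≤ ∫⁻ x in B, ∫⁻ y in B, ENNReal.ofReal M * (2 * n x + 2 * n y) ∂μ ∂μ :=
        setLIntegral_mono' hB fun x hx => setLIntegral_mono' hB (hpt x hx)
    _ = ∫⁻ x in B, ENNReal.ofReal M * (2 * μ B * n x + 2 * ∫⁻ y in B, n y ∂μ) ∂μ := by
        refine lintegral_congr fun x => ?_
        rw [lintegral_const_mul' _ _ ENNReal.ofReal_ne_top, lintegral_add_right _ (hn.const_mul 2),
          lintegral_const_mul 2 hn, setLIntegral_const]
        ring
    _ = 4 * ENNReal.ofReal M * μ B * ∫⁻ x in B, n x ∂μ := by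
        rw [lintegral_const_mul' _ _ ENNReal.ofReal_ne_top, lintegral_add_right _ measurable_const,
          lintegral_const_mul _ hn, setLIntegral_const]
        ring

variable [MeasurableSub₂ E] [SFinite μ]

theorem toReal_nonlocalEnergy (hGm : Measurable G) (hG0 : ∀ z, 0 ≤ G z) (ham : Measurable a)
    (ha0 : ∀ x, 0 ≤ a x) (hv : Measurable v) (hfin : nonlocalEnergy μ B G a v ≠ ∞) :
    (nonlocalEnergy μ B G a v).toReal =
      (∫ x in B, ∫ y in B, G (x - y) * (v x - v y) ^ 2 ∂μ ∂μ) + ∫ x in B, a x * v x ^ 2 ∂μ := by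
  rw [nonlocalEnergy] at hfin ⊢
  obtain ⟨hD, hE⟩ := ENNReal.add_ne_top.1 hfin
  have hF : Measurable
      (Function.uncurry fun x y => ENNReal.ofReal (G (x - y) * (v x - v y) ^ 2)) := by
    fun_prop
  rw [ENNReal.toReal_add hD hE, integral_eq_lintegral_of_nonneg_ae
      (.of_forall fun x => mul_nonneg (ha0 x) (sq_nonneg _))
      (ham.mul (hv.pow_const 2)).aestronglyMeasurable,
    ← integral_toReal hF.lintegral_prod_right.aemeasurable (ae_lt_top hF.lintegral_prod_right hD)]
  congr 1
  refine integral_congr_ae (.of_forall fun x => (integral_eq_lintegral_of_nonneg_ae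
    (.of_forall fun y => mul_nonneg (hG0 _) (sq_nonneg _)) ?_).symm)
  fun_prop

theorem MassBoundedByEnergyOn.exists_pos_mul_integral_sq_le {M M' : ℝ}
    (h : MassBoundedByEnergyOn μ B G a B) (hB : MeasurableSet B) (hBμ : μ B ≠ ∞)
    (hGm : Measurable G) (hG0 : ∀ z, 0 ≤ G z) (hGM : ∀ x ∈ B, ∀ y ∈ B, G (x - y) ≤ M)
    (ham : Measurable a) (ha0 : ∀ x, 0 ≤ a x) (haM : ∀ x ∈ B, a x ≤ M') :
    ∃ Cc > (0 : ℝ), ∀ v : E → ℝ, MemLp v 2 (μ.restrict B) →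
      Cc * ∫ x in B, v x ^ 2 ∂μ ≤
        1 / 2 * (∫ x in B, ∫ y in B, G (x - y) * (v x - v y) ^ 2 ∂μ ∂μ)
          + ∫ x in B, a x * v x ^ 2 ∂μ := by
  obtain ⟨C, hC, hbound⟩ := h
  refine ⟨(2 * (C.toReal + 1))⁻¹, by positivity, fun v hv => ?_⟩
  set w := hv.1.mk v
  have hvw : v =ᵐ[μ.restrict B] w := hv.1.ae_eq_mk
  have hw : Measurable w := hv.1.stronglyMeasurable_mk.measurable
  have hN : ∫ x in B, v x ^ 2 ∂μ = (∫⁻ x in B, ENNReal.ofReal (w x ^ 2) ∂μ).toReal := by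
    rw [integral_congr_ae (hvw.mono fun x (hx : v x = w x) => by rw [hx]),
      integral_eq_lintegral_of_nonneg_ae
      (.of_forall fun x => sq_nonneg _) (hw.pow_const 2).aestronglyMeasurable]
  have hNfin : ∫⁻ x in B, ENNReal.ofReal (w x ^ 2) ∂μ ≠ ∞ :=
    (hv.ae_eq hvw).integrable_sq.lintegral_lt_top.ne
  have hE : ∫⁻ x in B, ENNReal.ofReal (a x * w x ^ 2) ∂μ
      ≤ ENNReal.ofReal M' * ∫⁻ x in B, ENNReal.ofReal (w x ^ 2) ∂μ := by
    rw [← lintegral_const_mul _ (hw.pow_const 2).ennreal_ofReal]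
    refine setLIntegral_mono' hB fun x hx => ?_
    rw [← ENNReal.ofReal_mul' (sq_nonneg _)]
    exact ENNReal.ofReal_le_ofReal (mul_le_mul_of_nonneg_right (haM x hx) (sq_nonneg _))
  have hfin : nonlocalEnergy μ B G a w ≠ ∞ := ENNReal.add_ne_top.2
    ⟨((lintegral_kernel_energy_le hB hw hG0 hGM).trans_lt (by finiteness)).ne,
      (hE.trans_lt (by finiteness)).ne⟩
  have hreal := ENNReal.toReal_mono (ENNReal.mul_ne_top hC hfin) (hbound w hw)
  have hS := (toReal_nonlocalEnergy hGm hG0 ham ha0 hw hfin).symm.trans_ge ENNReal.toReal_nonneg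
  rw [ENNReal.toReal_mul, toReal_nonlocalEnergy hGm hG0 ham ha0 hw hfin, ← hN] at hreal
  have hDvw : ∫ x in B, ∫ y in B, G (x - y) * (v x - v y) ^ 2 ∂μ ∂μ
      = ∫ x in B, ∫ y in B, G (x - y) * (w x - w y) ^ 2 ∂μ ∂μ := by
    refine integral_congr_ae ?_
    filter_upwards [hvw] with x hx
    exact integral_congr_ae (hvw.mono fun y (hy : v y = w y) => by simp only [hx, hy])
  have hEvw : ∫ x in B, a x * v x ^ 2 ∂μ = ∫ x in B, a x * w x ^ 2 ∂μ :=
    integral_congr_ae (hvw.mono fun x (hx : v x = w x) => by simp only [hx])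
  have hE0 : 0 ≤ ∫ x in B, a x * w x ^ 2 ∂μ :=
    integral_nonneg fun x => mul_nonneg (ha0 x) (sq_nonneg _)
  have hN0 : 0 ≤ ∫ x in B, v x ^ 2 ∂μ := integral_nonneg fun x => sq_nonneg _
  rw [hDvw, hEvw, inv_mul_le_iff₀ (by positivity)]
  nlinarith [mul_nonneg (add_nonneg ENNReal.toReal_nonneg zero_le_one : 0 ≤ C.toReal + 1) hE0]

end Energy

end

theorem stmt_3_general {N : ℕ} (A B : Set (EuclideanSpace ℝ (Fin N)))
    (hAb : Bornology.IsBounded A)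
    (hBo : IsOpen B) (hBc : IsConnected B) (hBb : Bornology.IsBounded B)
    (J G : EuclideanSpace ℝ (Fin N) → ℝ)
    (hJc : Continuous J) (hGc : Continuous G)
    (hJ0 : ∀ z, 0 ≤ J z) (hG0 : ∀ z, 0 ≤ G z)
    (hGpos : 0 < G 0)
    (hapos : 0 < volume {x | x ∈ B ∧ 0 < ∫ y in A, J (x - y)}) :
    ∃ Cc > (0 : ℝ), ∀ v : EuclideanSpace ℝ (Fin N) → ℝ,
      MemLp v 2 (volume.restrict B) →
      Cc * ∫ x in B, (v x) ^ 2 ≤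
        (1 / 2) * (∫ x in B, ∫ y in B, G (x - y) * (v x - v y) ^ 2)
          + ∫ x in B, (∫ y in A, J (x - y)) * (v x) ^ 2 := by
  have ha : Continuous fun x => ∫ y in A, J (x - y) := continuous_setIntegral_comp_sub hAb hJc
  obtain ⟨x₀, hx₀B, hax₀⟩ := nonempty_of_measure_ne_zero hapos.ne'
  have hK := hBb.isCompact_closure
  obtain ⟨MG, hMG⟩ := (hK.prod hK).exists_bound_of_continuousOn
    (hGc.comp (continuous_fst.sub continuous_snd)).continuousOn
  obtain ⟨Ma, hMa⟩ := hK.exists_bound_of_continuousOn ha.continuousOn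
  exact (massBoundedByEnergyOn_of_isPreconnected hBo hBc.isPreconnected hBb hGc.continuousAt hGpos
    ha.continuousAt hx₀B hax₀).exists_pos_mul_integral_sq_le hBo.measurableSet
    hBb.measure_lt_top.ne hGc.measurable hG0
    (fun x hx y hy => (le_abs_self _).trans (hMG (x, y) ⟨subset_closure hx, subset_closure hy⟩))
    ha.measurable (fun x => integral_nonneg fun y => hJ0 _)
    fun x hx => (le_abs_self _).trans (hMa x (subset_closure hx))

/-- Coercivity of the nonlocal bilinear form: if `B` is a bounded connected open set,
`G` is a nonnegative continuous symmetric kernel with `G 0 > 0`, `J` is nonnegative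
continuous and `a(x) = ∫_A J(x-y) dy` is positive on a subset of `B` of positive measure,
then there is `Cc > 0` with
`(1/2) ∬_{B×B} G(x-y)(v(x)-v(y))² + ∫_B a v² ≥ Cc ‖v‖²_{L²(B)}` for all `v ∈ L²(B)`. -/
theorem stmt_3 {N : ℕ} (A B : Set (EuclideanSpace ℝ (Fin N)))
    (hAm : MeasurableSet A) (hAb : Bornology.IsBounded A)
    (hBo : IsOpen B) (hBc : IsConnected B) (hBb : Bornology.IsBounded B)
    (J G : EuclideanSpace ℝ (Fin N) → ℝ)
    (hJc : Continuous J) (hGc : Continuous G)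
    (hJ0 : ∀ z, 0 ≤ J z) (hG0 : ∀ z, 0 ≤ G z)
    (hJs : ∀ z, J (-z) = J z) (hGs : ∀ z, G (-z) = G z)
    (hGpos : 0 < G 0)
    (hapos : 0 < volume {x | x ∈ B ∧ 0 < ∫ y in A, J (x - y)}) :
    ∃ Cc > (0 : ℝ), ∀ v : EuclideanSpace ℝ (Fin N) → ℝ,
      MemLp v 2 (volume.restrict B) →
      Cc * ∫ x in B, (v x) ^ 2 ≤
        (1 / 2) * (∫ x in B, ∫ y in B, G (x - y) * (v x - v y) ^ 2)
          + ∫ x in B, (∫ y in A, J (x - y)) * (v x) ^ 2 :=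
  stmt_3_general A B hAb hBo hBc hBb J G hJc hGc hJ0 hG0 hGpos hapos
end

section
/- Under the coercivity hypothesis with constant $C_c > 0$, the solution map $T_{AB}: L^2(A) \to L^2(B)$, assigning to $u$ the unique solution $v$ of the nonlocal elliptic equation $0 = \int_B G(x-y)(v(y)-v(x))\,dy + \int_A J(x-y)(u(y)-v(x))\,dy$, is Lipschitz: for all $u_1, u_2 \in L^2(A)$, $$\|T_{AB}(u_1) - T_{AB}(u_2)\|_{L^2(B)} \leq \frac{1}{C_c}\left(\int_B\int_A J(x-y)^2\,dy\,dx\right)^{1/2}\|u_1 - u_2\|_{L^2(A)}.$$ -/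
/-! The difference `w = v₁ - v₂` solves the equation with datum `f = u₁ - u₂`. Testing that
equation against `w` and symmetrizing the `G`-term produces exactly the coercive form, so
`Cc ‖w‖² ≤ ∫_B (∫_A J(x-y) f(y) dy) w(x) dx`. Cauchy–Schwarz in `x`, then in `y` for each `x`
(the Hilbert–Schmidt bound of the operator with kernel `J`), bounds the right side by
`‖J‖_{L²(B×A)} ‖f‖ ‖w‖`, and dividing by `Cc ‖w‖` gives the claim. -/

open MeasureTheory Function

section CauchySchwarz

variable {α : Type*} [MeasurableSpace α] {μ : Measure α} {f g : α → ℝ}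

theorem sq_integral_mul_le_s4 (hf : MemLp f 2 μ) (hg : MemLp g 2 μ) :
    (∫ x, f x * g x ∂μ) ^ 2 ≤ (∫ x, f x ^ 2 ∂μ) * ∫ x, g x ^ 2 ∂μ := by
  have hfg : Integrable (fun x => f x * g x) μ := hf.integrable_mul hg
  -- the quadratic `t ↦ ∫ (f + t g)²` is nonnegative, so its discriminant is nonpositive
  have hquad : ∀ t : ℝ, 0 ≤ (∫ x, g x ^ 2 ∂μ) * (t * t) + (2 * ∫ x, f x * g x ∂μ) * t
      + ∫ x, f x ^ 2 ∂μ := by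
    intro t
    have hexpand : (fun x => (f x + t * g x) ^ 2)
        = fun x => t * t * g x ^ 2 + 2 * t * (f x * g x) + f x ^ 2 := by
      ext x; ring
    have hg₂ : Integrable (fun x => t * t * g x ^ 2) μ := hg.integrable_sq.const_mul _
    have hfg₂ : Integrable (fun x => 2 * t * (f x * g x)) μ := hfg.const_mul _
    have hnonneg : 0 ≤ ∫ x, (f x + t * g x) ^ 2 ∂μ := integral_nonneg fun x => sq_nonneg _
    rw [hexpand, integral_add ?_ hf.integrable_sq, integral_add hg₂ hfg₂, integral_const_mul,
      integral_const_mul] at hnonneg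
    · linarith
    · exact hg₂.add hfg₂
  have := discrim_le_zero hquad
  rw [discrim] at this
  linarith

end CauchySchwarz

theorem sqrt_le_one_div_mul_sqrt_mul_sqrt {c X K F : ℝ} (hc : 0 < c) (hX : 0 ≤ X) (hK : 0 ≤ K)
    (h : (c * X) ^ 2 ≤ K * F * X) : √X ≤ 1 / c * √K * √F := by
  rcases hX.eq_or_lt with rfl | hX_pos
  · rw [Real.sqrt_zero]
    positivity
  have hcX : c ^ 2 * X ≤ K * F := le_of_mul_le_mul_right (by linarith) hX_pos
  calc √X = 1 / c * √(c ^ 2 * X) := by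
        rw [Real.sqrt_mul (sq_nonneg c), Real.sqrt_sq hc.le]
        field_simp
    _ ≤ 1 / c * √(K * F) := by gcongr
    _ = 1 / c * √K * √F := by rw [Real.sqrt_mul hK, mul_assoc]

section BoundedKernel

variable {α β : Type*} [MeasurableSpace α] [MeasurableSpace β] {μ : Measure α} {ν : Measure β}
  {k : α → β → ℝ} {C : ℝ}

theorem integrable_kernel_mul (hk : StronglyMeasurable (uncurry k)) (hC : ∀ x y, ‖k x y‖ ≤ C)
    {f : β → ℝ} (hf : Integrable f ν) (x : α) : Integrable (fun y => k x y * f y) ν :=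
  hf.bdd_mul (hk.comp_measurable measurable_prodMk_left).aestronglyMeasurable
    (ae_of_all _ (hC x))

theorem memLp_kernel_slice [IsFiniteMeasure ν] (hk : StronglyMeasurable (uncurry k))
    (hC : ∀ x y, ‖k x y‖ ≤ C) (p : ENNReal) (x : α) : MemLp (k x) p ν :=
  .of_bound (hk.comp_measurable measurable_prodMk_left).aestronglyMeasurable C
    (ae_of_all _ (hC x))

theorem integral_kernel_mul_sub [IsFiniteMeasure ν] (hk : StronglyMeasurable (uncurry k))
    (hC : ∀ x y, ‖k x y‖ ≤ C) {f : β → ℝ} (hf : Integrable f ν) (x : α) (c : ℝ) :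
    ∫ y, k x y * (f y - c) ∂ν = ∫ y, k x y * f y ∂ν - (∫ y, k x y ∂ν) * c := by
  simp_rw [mul_sub]
  rw [integral_sub (integrable_kernel_mul hk hC hf x)
    ((memLp_kernel_slice hk hC 1 x).integrable le_rfl |>.mul_const c), integral_mul_const]

theorem integral_kernel_mul_sub_sub [IsFiniteMeasure ν] (hk : StronglyMeasurable (uncurry k))
    (hC : ∀ x y, ‖k x y‖ ≤ C) {f₁ f₂ : β → ℝ} (hf₁ : Integrable f₁ ν) (hf₂ : Integrable f₂ ν)
    (x : α) (c₁ c₂ : ℝ) :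
    ∫ y, k x y * ((f₁ y - f₂ y) - (c₁ - c₂)) ∂ν
      = ∫ y, k x y * (f₁ y - c₁) ∂ν - ∫ y, k x y * (f₂ y - c₂) ∂ν := by
  rw [← integral_sub
    (integrable_kernel_mul hk hC (f := fun y => f₁ y - c₁) (hf₁.sub (integrable_const c₁)) x)
    (integrable_kernel_mul hk hC (f := fun y => f₂ y - c₂) (hf₂.sub (integrable_const c₂)) x)]
  congr 1 with y
  ring

theorem memLp_top_integral_kernel_mul [SFinite ν] (hk : StronglyMeasurable (uncurry k))
    (hC : ∀ x y, ‖k x y‖ ≤ C) {f : β → ℝ} (hf : Integrable f ν) :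
    MemLp (fun x => ∫ y, k x y * f y ∂ν) ⊤ μ := by
  refine memLp_top_of_bound
    (hk.aestronglyMeasurable.mul hf.aestronglyMeasurable.comp_snd).integral_prod_right'
    (C * ∫ y, ‖f y‖ ∂ν) (ae_of_all _ fun x => ?_)
  rw [← integral_const_mul]
  refine norm_integral_le_of_norm_le (hf.norm.const_mul C) (ae_of_all _ fun y => ?_)
  rw [norm_mul]
  exact mul_le_mul_of_nonneg_right (hC x y) (norm_nonneg _)

theorem memLp_top_integral_kernel [IsFiniteMeasure ν] (hk : StronglyMeasurable (uncurry k))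
    (hC : ∀ x y, ‖k x y‖ ≤ C) : MemLp (fun x => ∫ y, k x y ∂ν) ⊤ μ := by
  simpa using memLp_top_integral_kernel_mul (μ := μ) hk hC (integrable_const (1 : ℝ))

theorem integral_sq_integral_kernel_mul_le [IsFiniteMeasure μ] [IsFiniteMeasure ν]
    (hk : StronglyMeasurable (uncurry k)) (hC : ∀ x y, ‖k x y‖ ≤ C) {f : β → ℝ}
    (hf : MemLp f 2 ν) :
    ∫ x, (∫ y, k x y * f y ∂ν) ^ 2 ∂μ ≤ (∫ x, ∫ y, k x y ^ 2 ∂ν ∂μ) * ∫ y, f y ^ 2 ∂ν := by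
  have hk2 : MemLp (fun x => ∫ y, k x y ^ 2 ∂ν) ⊤ μ :=
    memLp_top_integral_kernel (k := fun x y => k x y ^ 2) (hk.pow 2) (C := C ^ 2) fun x y => by
      rw [norm_pow]; exact pow_le_pow_left₀ (norm_nonneg _) (hC x y) 2
  rw [← integral_mul_const]
  exact integral_mono_of_nonneg (ae_of_all _ fun x => sq_nonneg _)
    ((hk2.integrable le_top).mul_const _)
    (ae_of_all _ fun x => sq_integral_mul_le_s4 (memLp_kernel_slice hk hC 2 x) hf)

theorem integral_integral_kernel_mul_sub_mul [IsFiniteMeasure μ] {g : α → α → ℝ}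
    (hg : StronglyMeasurable (uncurry g)) (hC : ∀ x y, ‖g x y‖ ≤ C)
    (hsymm : ∀ x y, g x y = g y x) {w : α → ℝ} (hw : MemLp w 2 μ) :
    ∫ x, (∫ y, g x y * (w y - w x) ∂μ) * w x ∂μ
      = -(1 / 2) * ∫ x, ∫ y, g x y * (w x - w y) ^ 2 ∂μ ∂μ := by
  set F : α × α → ℝ := fun p => g p.1 p.2 * (w p.2 - w p.1) * w p.1 with hFdef
  have hF : Integrable F (μ.prod μ) := by
    have hw₁ : Integrable w μ := hw.integrable one_le_two
    refine (((hw₁.mul_prod hw₁).sub (hw.integrable_sq.comp_fst μ)).bdd_mul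
      hg.aestronglyMeasurable (ae_of_all _ fun p => hC p.1 p.2)).congr (ae_of_all _ fun p => ?_)
    simp only [hFdef, uncurry, Pi.sub_apply]
    ring
  -- swapping the variables turns `F` into the other half of the square
  have hsq : ∀ x y, g x y * (w x - w y) ^ 2 = -(F (x, y) + F (x, y).swap) := fun x y => by
    simp only [hFdef, Prod.swap_prod_mk]
    rw [hsymm y x]
    ring
  have hF_swap : Integrable (fun p => F p.swap) (μ.prod μ) := hF.swap
  have hsq_int : Integrable (fun p : α × α => g p.1 p.2 * (w p.1 - w p.2) ^ 2) (μ.prod μ) :=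
    (hF.add hF_swap).neg.congr (ae_of_all _ fun p => (hsq p.1 p.2).symm)
  calc ∫ x, (∫ y, g x y * (w y - w x) ∂μ) * w x ∂μ = ∫ p, F p ∂(μ.prod μ) := by
        rw [integral_prod F hF]
        simp only [hFdef, integral_mul_const]
    _ = -(1 / 2) * ∫ p, -(F p + F p.swap) ∂(μ.prod μ) := by
        rw [integral_neg, integral_add hF hF_swap, integral_prod_swap F]
        ring
    _ = -(1 / 2) * ∫ p, g p.1 p.2 * (w p.1 - w p.2) ^ 2 ∂(μ.prod μ) := by
        congr 1
        exact integral_congr_ae (ae_of_all _ fun p => (hsq p.1 p.2).symm)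
    _ = -(1 / 2) * ∫ x, ∫ y, g x y * (w x - w y) ^ 2 ∂μ ∂μ := by
        rw [integral_prod _ hsq_int]

theorem energy_identity [IsFiniteMeasure μ] [IsFiniteMeasure ν] {g : α → α → ℝ} {Cg : ℝ}
    (hg : StronglyMeasurable (uncurry g)) (hgC : ∀ x y, ‖g x y‖ ≤ Cg)
    (hsymm : ∀ x y, g x y = g y x) (hk : StronglyMeasurable (uncurry k)) (hkC : ∀ x y, ‖k x y‖ ≤ C)
    {w : α → ℝ} {f : β → ℝ} (hw : MemLp w 2 μ) (hf : Integrable f ν)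
    (heq : ∀ᵐ x ∂μ, ∫ y, g x y * (w y - w x) ∂μ + ∫ y, k x y * (f y - w x) ∂ν = 0) :
    (1 / 2) * (∫ x, ∫ y, g x y * (w x - w y) ^ 2 ∂μ ∂μ) + ∫ x, (∫ y, k x y ∂ν) * w x ^ 2 ∂μ
      = ∫ x, (∫ y, k x y * f y ∂ν) * w x ∂μ := by
  have hsource : Integrable (fun x => (∫ y, k x y * f y ∂ν) * w x) μ :=
    (hw.integrable one_le_two).mul_of_top_right (memLp_top_integral_kernel_mul hk hkC hf)
  have hmass : Integrable (fun x => (∫ y, k x y ∂ν) * w x ^ 2) μ :=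
    hw.integrable_sq.mul_of_top_right (memLp_top_integral_kernel hk hkC)
  have htest : ∫ x, (∫ y, g x y * (w y - w x) ∂μ) * w x ∂μ
      = ∫ x, (∫ y, k x y ∂ν) * w x ^ 2 ∂μ - ∫ x, (∫ y, k x y * f y ∂ν) * w x ∂μ := by
    rw [← integral_sub hmass hsource]
    refine integral_congr_ae ?_
    filter_upwards [heq] with x hx
    rw [integral_kernel_mul_sub hk hkC hf] at hx
    linear_combination w x * hx
  rw [integral_integral_kernel_mul_sub_mul hg hgC hsymm hw] at htest
  linarith

theorem sqrt_integral_sq_le_of_coercive [IsFiniteMeasure μ] [IsFiniteMeasure ν]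
    {g : α → α → ℝ} {Cg Cc : ℝ} (hg : StronglyMeasurable (uncurry g))
    (hgC : ∀ x y, ‖g x y‖ ≤ Cg) (hsymm : ∀ x y, g x y = g y x)
    (hk : StronglyMeasurable (uncurry k)) (hkC : ∀ x y, ‖k x y‖ ≤ C) (hCc : 0 < Cc)
    {w : α → ℝ} {f : β → ℝ} (hw : MemLp w 2 μ) (hf : MemLp f 2 ν)
    (hcoer : Cc * ∫ x, w x ^ 2 ∂μ ≤ (1 / 2) * (∫ x, ∫ y, g x y * (w x - w y) ^ 2 ∂μ ∂μ)
      + ∫ x, (∫ y, k x y ∂ν) * w x ^ 2 ∂μ)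
    (heq : ∀ᵐ x ∂μ, ∫ y, g x y * (w y - w x) ∂μ + ∫ y, k x y * (f y - w x) ∂ν = 0) :
    √(∫ x, w x ^ 2 ∂μ) ≤ 1 / Cc * √(∫ x, ∫ y, k x y ^ 2 ∂ν ∂μ) * √(∫ y, f y ^ 2 ∂ν) := by
  rw [energy_identity hg hgC hsymm hk hkC hw (hf.integrable one_le_two) heq] at hcoer
  have hw_nonneg : 0 ≤ ∫ x, w x ^ 2 ∂μ := integral_nonneg fun x => sq_nonneg _
  have hsource : MemLp (fun x => ∫ y, k x y * f y ∂ν) 2 μ :=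
    (memLp_top_integral_kernel_mul hk hkC (hf.integrable one_le_two)).mono_exponent le_top
  refine sqrt_le_one_div_mul_sqrt_mul_sqrt hCc hw_nonneg
    (integral_nonneg fun x => integral_nonneg fun y => sq_nonneg _) ?_
  calc (Cc * ∫ x, w x ^ 2 ∂μ) ^ 2 ≤ (∫ x, (∫ y, k x y * f y ∂ν) * w x ∂μ) ^ 2 :=
        pow_le_pow_left₀ (by positivity) hcoer 2
    _ ≤ (∫ x, (∫ y, k x y * f y ∂ν) ^ 2 ∂μ) * ∫ x, w x ^ 2 ∂μ := sq_integral_mul_le_s4 hsource hw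
    _ ≤ (∫ x, ∫ y, k x y ^ 2 ∂ν ∂μ) * (∫ y, f y ^ 2 ∂ν) * ∫ x, w x ^ 2 ∂μ :=
        mul_le_mul_of_nonneg_right (integral_sq_integral_kernel_mul_le hk hkC hf) hw_nonneg

end BoundedKernel

theorem stmt_4_general {N : ℕ} (A B : Set (EuclideanSpace ℝ (Fin N)))
    (hAb : Bornology.IsBounded A) (hBb : Bornology.IsBounded B)
    (J G : EuclideanSpace ℝ (Fin N) → ℝ)
    (hJc : Continuous J) (hGc : Continuous G)
    (hJ0 : ∀ z, 0 ≤ J z) (hG0 : ∀ z, 0 ≤ G z)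
    (hJbd : ∃ C, ∀ z, J z ≤ C) (hGbd : ∃ C, ∀ z, G z ≤ C)
    (hGs : ∀ z, G (-z) = G z)
    (Cc : ℝ) (hCc : 0 < Cc)
    (hcoer : ∀ w : EuclideanSpace ℝ (Fin N) → ℝ, MemLp w 2 (volume.restrict B) →
      Cc * ∫ x in B, (w x) ^ 2 ≤
        (1 / 2) * (∫ x in B, ∫ y in B, G (x - y) * (w x - w y) ^ 2)
          + ∫ x in B, (∫ y in A, J (x - y)) * (w x) ^ 2)
    (u₁ u₂ v₁ v₂ : EuclideanSpace ℝ (Fin N) → ℝ)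
    (hu₁ : MemLp u₁ 2 (volume.restrict A)) (hu₂ : MemLp u₂ 2 (volume.restrict A))
    (hv₁ : MemLp v₁ 2 (volume.restrict B)) (hv₂ : MemLp v₂ 2 (volume.restrict B))
    (he₁ : ∀ᵐ x ∂(volume.restrict B),
      0 = (∫ y in B, G (x - y) * (v₁ y - v₁ x)) + ∫ y in A, J (x - y) * (u₁ y - v₁ x))
    (he₂ : ∀ᵐ x ∂(volume.restrict B),
      0 = (∫ y in B, G (x - y) * (v₂ y - v₂ x)) + ∫ y in A, J (x - y) * (u₂ y - v₂ x)) :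
    Real.sqrt (∫ x in B, (v₁ x - v₂ x) ^ 2) ≤
      (1 / Cc) * Real.sqrt (∫ x in B, ∫ y in A, (J (x - y)) ^ 2)
        * Real.sqrt (∫ x in A, (u₁ x - u₂ x) ^ 2) := by
  have : IsFiniteMeasure (volume.restrict A) := isFiniteMeasure_restrict.2 hAb.measure_lt_top.ne
  have : IsFiniteMeasure (volume.restrict B) := isFiniteMeasure_restrict.2 hBb.measure_lt_top.ne
  obtain ⟨CJ, hCJ⟩ := hJbd
  obtain ⟨CG, hCG⟩ := hGbd
  have hJm : StronglyMeasurable (uncurry fun x y : EuclideanSpace ℝ (Fin N) => J (x - y)) :=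
    (hJc.comp (continuous_fst.sub continuous_snd)).stronglyMeasurable
  have hGm : StronglyMeasurable (uncurry fun x y : EuclideanSpace ℝ (Fin N) => G (x - y)) :=
    (hGc.comp (continuous_fst.sub continuous_snd)).stronglyMeasurable
  have hJC : ∀ x y, ‖J (x - y)‖ ≤ CJ := fun x y => (Real.norm_of_nonneg (hJ0 _)).trans_le (hCJ _)
  have hGC : ∀ x y, ‖G (x - y)‖ ≤ CG := fun x y => (Real.norm_of_nonneg (hG0 _)).trans_le (hCG _)
  have hGsymm : ∀ x y, G (x - y) = G (y - x) := fun x y => by rw [← hGs, neg_sub]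
  have heq : ∀ᵐ x ∂(volume.restrict B), (∫ y in B, G (x - y) * ((v₁ y - v₂ y) - (v₁ x - v₂ x)))
      + ∫ y in A, J (x - y) * ((u₁ y - u₂ y) - (v₁ x - v₂ x)) = 0 := by
    filter_upwards [he₁, he₂] with x h₁ h₂
    rw [integral_kernel_mul_sub_sub hGm hGC (hv₁.integrable one_le_two)
      (hv₂.integrable one_le_two), integral_kernel_mul_sub_sub hJm hJC
      (hu₁.integrable one_le_two) (hu₂.integrable one_le_two)]
    linarith
  exact sqrt_integral_sq_le_of_coercive hGm hGC hGsymm hJm hJC hCc (hv₁.sub hv₂) (hu₁.sub hu₂)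
    (hcoer _ (hv₁.sub hv₂)) heq

/-- Lipschitz dependence of the solution of the nonlocal elliptic equation on the datum:
under coercivity with constant `Cc > 0`, if `v₁, v₂ ∈ L²(B)` solve the equation with data
`u₁, u₂ ∈ L²(A)` respectively, then
`‖v₁ - v₂‖_{L²(B)} ≤ (1/Cc) (∬_{B×A} J²)^{1/2} ‖u₁ - u₂‖_{L²(A)}`. -/
theorem stmt_4 {N : ℕ} (A B : Set (EuclideanSpace ℝ (Fin N)))
    (hAm : MeasurableSet A) (hBm : MeasurableSet B)
    (hAb : Bornology.IsBounded A) (hBb : Bornology.IsBounded B)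
    (J G : EuclideanSpace ℝ (Fin N) → ℝ)
    (hJc : Continuous J) (hGc : Continuous G)
    (hJ0 : ∀ z, 0 ≤ J z) (hG0 : ∀ z, 0 ≤ G z)
    (hJbd : ∃ C, ∀ z, J z ≤ C) (hGbd : ∃ C, ∀ z, G z ≤ C)
    (hJs : ∀ z, J (-z) = J z) (hGs : ∀ z, G (-z) = G z)
    (Cc : ℝ) (hCc : 0 < Cc)
    (hcoer : ∀ w : EuclideanSpace ℝ (Fin N) → ℝ, MemLp w 2 (volume.restrict B) →
      Cc * ∫ x in B, (w x) ^ 2 ≤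
        (1 / 2) * (∫ x in B, ∫ y in B, G (x - y) * (w x - w y) ^ 2)
          + ∫ x in B, (∫ y in A, J (x - y)) * (w x) ^ 2)
    (u₁ u₂ v₁ v₂ : EuclideanSpace ℝ (Fin N) → ℝ)
    (hu₁ : MemLp u₁ 2 (volume.restrict A)) (hu₂ : MemLp u₂ 2 (volume.restrict A))
    (hv₁ : MemLp v₁ 2 (volume.restrict B)) (hv₂ : MemLp v₂ 2 (volume.restrict B))
    (he₁ : ∀ᵐ x ∂(volume.restrict B),
      0 = (∫ y in B, G (x - y) * (v₁ y - v₁ x)) + ∫ y in A, J (x - y) * (u₁ y - v₁ x))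
    (he₂ : ∀ᵐ x ∂(volume.restrict B),
      0 = (∫ y in B, G (x - y) * (v₂ y - v₂ x)) + ∫ y in A, J (x - y) * (u₂ y - v₂ x)) :
    Real.sqrt (∫ x in B, (v₁ x - v₂ x) ^ 2) ≤
      (1 / Cc) * Real.sqrt (∫ x in B, ∫ y in A, (J (x - y)) ^ 2)
        * Real.sqrt (∫ x in A, (u₁ x - u₂ x) ^ 2) :=
  stmt_4_general A B hAb hBb J G hJc hGc hJ0 hG0 hJbd hGbd hGs Cc hCc hcoer u₁ u₂ v₁ v₂ hu₁ hu₂ hv₁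
    hv₂ he₁ he₂
end

section
/- Let $u : A \times [0,\infty) \to \mathbb{R}$ be a (sufficiently smooth) solution of $u_t = \Delta u + \int_B J(x-y)(v(y,t)-u(x,t))\,dy$ in $A$ with Neumann boundary condition $\partial u/\partial\eta = 0$ on $\partial A$, where for each $t$, $v(\cdot,t)$ solves the nonlocal elliptic equation $0 = \int_B G(x-y)(v(y,t)-v(x,t))\,dy + \int_A J(x-y)(u(y,t)-v(x,t))\,dy$ with symmetric kernels. Then the total mass in $A$ is conserved: $\int_A u(x,t)\,dx = \int_A u_0(x)\,dx$ for all $t > 0$. -/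
/-!
Integrating the parabolic equation over `A` and using `∫_A Δu = 0`, the mass changes at rate
`∫_A ∫_B J(x-y)(v(y)-u(x))`. Swapping the variables and using the symmetry of `J`, this equals
`-∫_B ∫_A J(x-y)(u(y)-v(x))`, which by the elliptic equation is `∫_B ∫_B G(x-y)(v(y)-v(x))`,
and that vanishes because its integrand is antisymmetric. A function continuous on `[0, ∞)`
with zero derivative on `(0, ∞)` is constant there.
-/

open MeasureTheory

variable {α β : Type*} [MeasurableSpace α] [MeasurableSpace β]

-- If `f` is not integrable, neither is `f + g`, and both integrals take the junk value `0`.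
lemma integral_add_eq_zero {μ : Measure α} {f g : α → ℝ} (hg : Integrable g μ)
    (hf0 : ∫ x, f x ∂μ = 0) (hg0 : ∫ x, g x ∂μ = 0) : ∫ x, (f x + g x) ∂μ = 0 := by
  by_cases hf : Integrable f μ
  · rw [integral_add hf hg, hf0, hg0, add_zero]
  · rw [integral_undef ((integrable_add_iff_integrable_left' hg).not.2 hf)]

lemma integrable_prod_mul_sub {μ : Measure α} {ν : Measure β} [IsFiniteMeasure μ]
    [IsFiniteMeasure ν] {k : α → β → ℝ} {C : ℝ} (hk : Measurable (Function.uncurry k))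
    (hkC : ∀ x y, ‖k x y‖ ≤ C) {f : α → ℝ} {g : β → ℝ} (hf : Integrable f μ)
    (hg : Integrable g ν) : Integrable (fun p => k p.1 p.2 * (g p.2 - f p.1)) (μ.prod ν) :=
  ((hg.comp_snd μ).sub (hf.comp_fst ν)).bdd_mul hk.aestronglyMeasurable
    (ae_of_all _ fun p => hkC p.1 p.2)

lemma integral_prod_self_eq_zero_of_swap_eq_neg {μ : Measure α} [SFinite μ] {F : α × α → ℝ}
    (hF : ∀ p, F p.swap = -F p) : ∫ p, F p ∂(μ.prod μ) = 0 := by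
  have hswap := integral_prod_swap (μ := μ) (ν := μ) F
  simp only [hF, integral_neg] at hswap
  linarith

lemma integral_integral_exchange_eq_zero {μ ν : Measure α} [IsFiniteMeasure μ]
    [IsFiniteMeasure ν] {k h : α → α → ℝ} {Ck Ch : ℝ}
    (hkm : Measurable (Function.uncurry k)) (hhm : Measurable (Function.uncurry h))
    (hkC : ∀ x y, ‖k x y‖ ≤ Ck) (hhC : ∀ x y, ‖h x y‖ ≤ Ch)
    (hks : ∀ x y, k x y = k y x) (hhs : ∀ x y, h x y = h y x)
    {u v : α → ℝ} (hu : Integrable u μ) (hv : Integrable v ν)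
    (hequil : ∀ᵐ x ∂ν, (∫ y, h x y * (v y - v x) ∂ν) + ∫ y, k x y * (u y - v x) ∂μ = 0) :
    ∫ x, ∫ y, k x y * (v y - u x) ∂ν ∂μ = 0 := by
  have hh_zero : ∫ p, h p.1 p.2 * (v p.2 - v p.1) ∂(ν.prod ν) = 0 :=
    integral_prod_self_eq_zero_of_swap_eq_neg fun p => by
      simp only [Prod.fst_swap, Prod.snd_swap, hhs p.2 p.1]
      ring
  calc ∫ x, ∫ y, k x y * (v y - u x) ∂ν ∂μ
      = ∫ p, k p.1 p.2 * (v p.2 - u p.1) ∂(μ.prod ν) :=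
        (integral_prod _ (integrable_prod_mul_sub hkm hkC hu hv)).symm
    _ = ∫ p, -(k p.1 p.2 * (u p.2 - v p.1)) ∂(ν.prod μ) := by
        rw [← integral_prod_swap]
        congr 1 with p
        simp only [Prod.fst_swap, Prod.snd_swap, hks p.2 p.1]
        ring
    _ = -∫ x, ∫ y, k x y * (u y - v x) ∂μ ∂ν := by
        rw [integral_neg, integral_prod _ (integrable_prod_mul_sub hkm hkC hv hu)]
    _ = ∫ x, ∫ y, h x y * (v y - v x) ∂ν ∂ν := by
        rw [← integral_neg]
        refine integral_congr_ae (hequil.mono fun x hx => ?_)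
        linarith
    _ = 0 := by rw [← integral_prod _ (integrable_prod_mul_sub hhm hhC hv hv), hh_zero]

lemma eq_of_continuousOn_Icc_of_hasDerivAt_zero {f : ℝ → ℝ} {a b : ℝ} (hab : a < b)
    (hf : ContinuousOn f (Set.Icc a b)) (hf' : ∀ x ∈ Set.Ioo a b, HasDerivAt f 0 x) :
    f b = f a := by
  obtain ⟨-, -, hslope⟩ := exists_hasDerivAt_eq_slope f (fun _ => 0) hab hf hf'
  rw [eq_comm, div_eq_zero_iff, sub_eq_zero] at hslope
  exact hslope.resolve_right (sub_ne_zero.2 hab.ne')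

theorem stmt_8_general {N : ℕ} (A B : Set (EuclideanSpace ℝ (Fin N)))
    (hBm : MeasurableSet B)
    (hAb : Bornology.IsBounded A) (hBb : Bornology.IsBounded B)
    (J G : EuclideanSpace ℝ (Fin N) → ℝ)
    (hJm : Measurable J) (hGm : Measurable G)
    (hJ0 : ∀ z, 0 ≤ J z) (hG0 : ∀ z, 0 ≤ G z)
    (hJbd : ∃ C, ∀ z, J z ≤ C) (hGbd : ∃ C, ∀ z, G z ≤ C)
    (hJs : ∀ z, J (-z) = J z) (hGs : ∀ z, G (-z) = G z)
    (u v L : EuclideanSpace ℝ (Fin N) → ℝ → ℝ)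
    (hu : ∀ t, IntegrableOn (fun x => u x t) A)
    (hv : ∀ t, IntegrableOn (fun x => v x t) B)
    (hEll : ∀ t > (0 : ℝ), ∀ x ∈ B,
      0 = (∫ y in B, G (x - y) * (v y t - v x t)) + ∫ y in A, J (x - y) * (u y t - v x t))
    (hNeumann : ∀ t > (0 : ℝ), (∫ x in A, L x t) = 0)
    (hDint : ∀ t > (0 : ℝ),
      HasDerivAt (fun s => ∫ x in A, u x s)
        (∫ x in A, (L x t + ∫ y in B, J (x - y) * (v y t - u x t))) t)
    (hcont : ContinuousOn (fun t => ∫ x in A, u x t) (Set.Ici (0 : ℝ))) :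
    ∀ t > (0 : ℝ), (∫ x in A, u x t) = ∫ x in A, u x 0 := by
  obtain ⟨CJ, hCJ⟩ := hJbd
  obtain ⟨CG, hCG⟩ := hGbd
  have : IsFiniteMeasure (volume.restrict A) := isFiniteMeasure_restrict.2 hAb.measure_lt_top.ne
  have : IsFiniteMeasure (volume.restrict B) := isFiniteMeasure_restrict.2 hBb.measure_lt_top.ne
  have hJn : ∀ x y : EuclideanSpace ℝ (Fin N), ‖J (x - y)‖ ≤ CJ := fun x y =>
    (Real.norm_of_nonneg (hJ0 _)).trans_le (hCJ _)
  have hGn : ∀ x y : EuclideanSpace ℝ (Fin N), ‖G (x - y)‖ ≤ CG := fun x y =>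
    (Real.norm_of_nonneg (hG0 _)).trans_le (hCG _)
  have hJm₂ : Measurable (Function.uncurry fun x y : EuclideanSpace ℝ (Fin N) => J (x - y)) :=
    hJm.comp (measurable_fst.sub measurable_snd)
  have hGm₂ : Measurable (Function.uncurry fun x y : EuclideanSpace ℝ (Fin N) => G (x - y)) :=
    hGm.comp (measurable_fst.sub measurable_snd)
  have hmass_deriv : ∀ t > (0 : ℝ), HasDerivAt (fun s => ∫ x in A, u x s) 0 t := by
    intro t ht
    have hexchange : ∫ x in A, ∫ y in B, J (x - y) * (v y t - u x t) = 0 :=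
      integral_integral_exchange_eq_zero hJm₂ hGm₂ hJn hGn
        (fun x y => by rw [← neg_sub, hJs]) (fun x y => by rw [← neg_sub, hGs]) (hu t) (hv t)
        ((ae_restrict_iff' hBm).2 (ae_of_all _ fun x hx => (hEll t ht x hx).symm))
    have hexchange_int : Integrable (fun x => ∫ y in B, J (x - y) * (v y t - u x t))
        (volume.restrict A) :=
      (integrable_prod_mul_sub hJm₂ hJn (hu t) (hv t)).integral_prod_left
    simpa only [integral_add_eq_zero hexchange_int (hNeumann t ht) hexchange] using hDint t ht
  intro t ht
  exact eq_of_continuousOn_Icc_of_hasDerivAt_zero ht (hcont.mono Set.Icc_subset_Ici_self)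
    fun s hs => hmass_deriv s hs.1

/-- Conservation of the total mass in `A` for the coupled parabolic–elliptic system:
if `u` solves `u_t = Δu + ∫_B J(x-y)(v(y,t)-u(x,t)) dy` in `A` with homogeneous Neumann
boundary condition (encoded here, via the divergence theorem, as `∫_A Δu(x,t) dx = 0`,
with `L = Δu`), and `v(·,t)` solves the nonlocal elliptic equation in `B`, then
`∫_A u(x,t) dx = ∫_A u₀(x) dx` for all `t > 0`. -/
theorem stmt_8 {N : ℕ} (A B : Set (EuclideanSpace ℝ (Fin N)))
    (hAm : MeasurableSet A) (hBm : MeasurableSet B)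
    (hAb : Bornology.IsBounded A) (hBb : Bornology.IsBounded B)
    (J G : EuclideanSpace ℝ (Fin N) → ℝ)
    (hJm : Measurable J) (hGm : Measurable G)
    (hJ0 : ∀ z, 0 ≤ J z) (hG0 : ∀ z, 0 ≤ G z)
    (hJbd : ∃ C, ∀ z, J z ≤ C) (hGbd : ∃ C, ∀ z, G z ≤ C)
    (hJs : ∀ z, J (-z) = J z) (hGs : ∀ z, G (-z) = G z)
    (u v L : EuclideanSpace ℝ (Fin N) → ℝ → ℝ)
    (hu : ∀ t, IntegrableOn (fun x => u x t) A)
    (hv : ∀ t, IntegrableOn (fun x => v x t) B)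
    (hPDE : ∀ x ∈ A, ∀ t > (0 : ℝ),
      HasDerivAt (u x) (L x t + ∫ y in B, J (x - y) * (v y t - u x t)) t)
    (hEll : ∀ t > (0 : ℝ), ∀ x ∈ B,
      0 = (∫ y in B, G (x - y) * (v y t - v x t)) + ∫ y in A, J (x - y) * (u y t - v x t))
    (hNeumann : ∀ t > (0 : ℝ), (∫ x in A, L x t) = 0)
    (hDint : ∀ t > (0 : ℝ),
      HasDerivAt (fun s => ∫ x in A, u x s)
        (∫ x in A, (L x t + ∫ y in B, J (x - y) * (v y t - u x t))) t)
    (hcont : ContinuousOn (fun t => ∫ x in A, u x t) (Set.Ici (0 : ℝ))) :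
    ∀ t > (0 : ℝ), (∫ x in A, u x t) = ∫ x in A, u x 0 :=
  stmt_8_general A B hBm hAb hBb J G hJm hGm hJ0 hG0 hJbd hGbd hJs hGs u v L hu hv hEll hNeumann
    hDint hcont
end

section
/- Let $(u,v)$ be a smooth solution of the elliptic–parabolic system (local elliptic Neumann equation for $u$ in $A$, nonlocal parabolic equation for $v$ in $B$, symmetric kernels, $\int_B v_0 = 0$). Then the energy identity $$\frac{d}{dt}\int_B \frac{v^2(x,t)}{2}\,dx = -\int_A|\nabla u(x,t)|^2\,dx - \frac12\int_B\int_B G(x-y)(v(x,t)-v(y,t))^2\,dx\,dy - \int_A\int_B J(x-y)(u(x,t)-v(y,t))^2\,dy\,dx$$ holds, and if $$\lambda_1 := \inf_{\|v\|_{L^2(B)}=1,\ \int_B v = 0}\Big\{\tfrac12\int_A|\nabla u|^2 + \tfrac14\iint_{B\times B}G(x-y)(v(x)-v(y))^2 + \tfrac12\iint_{A\times B}J(x-y)(v(y)-u(x))^2\Big\} > 0,$$ then $\|v(\cdot,t)\|_{L^2(B)} \leq e^{-\lambda_1 t/2}\|v_0\|_{L^2(B)}$ for all $t \geq 0$. 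-/
/-!
Testing the equation for `v` against `v`, the symmetry of the kernels lets one swap variables in
the double integrals: `v x (v y - v x)` symmetrises to `-(v x - v y)² / 2`, and `v x (u y - v x)`,
together with the elliptic equation tested against `u` (where Green's formula produces
`-∫ |∇u|²`), to `-(u x - v y)²`. The resulting dissipation is twice the Rayleigh energy of
`(u, v)`, which after normalising `v` is at least `λ₁ ‖v‖²`; hence `y = ‖v‖² / 2` satisfies
`y' ≤ -λ₁ y`, and `y e^{λ₁ t}` is nonincreasing.
-/

open MeasureTheory

namespace NonlocalKernel

variable {E : Type*} [MeasurableSpace E] [AddGroup E] [MeasurableSub₂ E]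
  {μ ν : Measure E} {K : E → ℝ} {C : ℝ}

theorem integrable_kernel_mul (hK : Measurable K) (hKC : ∀ z, ‖K z‖ ≤ C)
    {φ : E × E → ℝ} (hφ : Integrable φ (μ.prod ν)) :
    Integrable (fun p => K (p.1 - p.2) * φ p) (μ.prod ν) :=
  hφ.bdd_mul (hK.comp measurable_sub).aestronglyMeasurable
    (.of_forall fun p => hKC (p.1 - p.2))

section FiniteMeasure

variable [IsFiniteMeasure μ] [IsFiniteMeasure ν] {f g : E → ℝ}

theorem integrable_kernel_mul_mul_sub (hK : Measurable K) (hKC : ∀ z, ‖K z‖ ≤ C)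
    (hf : MemLp f 2 μ) (hg : MemLp g 2 ν) :
    Integrable (fun p => K (p.1 - p.2) * (f p.1 * (g p.2 - f p.1))) (μ.prod ν) := by
  have hfg := (hf.integrable one_le_two).mul_prod (hg.integrable one_le_two)
  have hff := hf.integrable_sq.comp_fst ν
  refine integrable_kernel_mul hK hKC ((hfg.sub hff).congr (.of_forall fun p => ?_))
  simp only [Pi.sub_apply]
  ring

theorem integral_mul_integral_eq_integral_prod (hK : Measurable K) (hKC : ∀ z, ‖K z‖ ≤ C)
    (hf : MemLp f 2 μ) (hg : MemLp g 2 ν) :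
    ∫ x, f x * ∫ y, K (x - y) * (g y - f x) ∂ν ∂μ =
      ∫ p, K (p.1 - p.2) * (f p.1 * (g p.2 - f p.1)) ∂(μ.prod ν) := by
  rw [integral_prod _ (integrable_kernel_mul_mul_sub hK hKC hf hg)]
  congr with x
  rw [← integral_const_mul]
  congr with y
  ring

theorem integrable_mul_integral (hK : Measurable K) (hKC : ∀ z, ‖K z‖ ≤ C)
    (hf : MemLp f 2 μ) (hg : MemLp g 2 ν) :
    Integrable (fun x => f x * ∫ y, K (x - y) * (g y - f x) ∂ν) μ := by
  refine (integrable_kernel_mul_mul_sub hK hKC hf hg).integral_prod_left.congr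
    (.of_forall fun x => ?_)
  dsimp only
  rw [← integral_const_mul]
  congr with y
  ring

/-- Nonlocal Green formula: after swapping the variables in the second pairing (which the
symmetry of `K` allows), the integrands add up to
`f x (g y - f x) + g y (f x - g y) = -(f x - g y)²`. -/
theorem integral_mul_integral_add_swap (hK : Measurable K) (hKC : ∀ z, ‖K z‖ ≤ C)
    (hKs : ∀ z, K (-z) = K z) (hf : MemLp f 2 μ) (hg : MemLp g 2 ν) :
    (∫ x, f x * ∫ y, K (x - y) * (g y - f x) ∂ν ∂μ) +
        ∫ y, g y * ∫ x, K (y - x) * (f x - g y) ∂μ ∂ν =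
      -∫ x, ∫ y, K (x - y) * (f x - g y) ^ 2 ∂ν ∂μ := by
  have hsymm : ∀ p : E × E, K (p.2 - p.1) = K (p.1 - p.2) := fun p => by rw [← hKs, neg_sub]
  have h₁ := integrable_kernel_mul_mul_sub hK hKC hf hg
  have h₂ : Integrable (fun p => K (p.1 - p.2) * (g p.2 * (f p.1 - g p.2))) (μ.prod ν) :=
    (integrable_kernel_mul_mul_sub hK hKC hg hf).swap.congr (.of_forall fun p => by simp [hsymm])
  have hswap : ∫ y, g y * ∫ x, K (y - x) * (f x - g y) ∂μ ∂ν =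
      ∫ p, K (p.1 - p.2) * (g p.2 * (f p.1 - g p.2)) ∂(μ.prod ν) := by
    rw [integral_mul_integral_eq_integral_prod hK hKC hg hf, ← integral_prod_swap]
    simp only [Prod.fst_swap, Prod.snd_swap, hsymm]
  have hsq : Integrable (fun p => K (p.1 - p.2) * (f p.1 - g p.2) ^ 2) (μ.prod ν) :=
    (h₁.add h₂).neg.congr (.of_forall fun p => by simp only [Pi.add_apply, Pi.neg_apply]; ring)
  rw [integral_mul_integral_eq_integral_prod hK hKC hf hg, hswap, ← integral_add h₁ h₂,
    ← integral_prod _ hsq, ← integral_neg]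
  congr with p
  ring

theorem integral_mul_integral_self (hK : Measurable K) (hKC : ∀ z, ‖K z‖ ≤ C)
    (hKs : ∀ z, K (-z) = K z) (hf : MemLp f 2 μ) :
    ∫ x, f x * ∫ y, K (x - y) * (f y - f x) ∂μ ∂μ =
      -(1 / 2) * ∫ x, ∫ y, K (x - y) * (f x - f y) ^ 2 ∂μ ∂μ := by
  linarith [integral_mul_integral_add_swap hK hKC hKs hf hf]

end FiniteMeasure

theorem integral_mul_flux_eq_neg_dissipation {A B : Set E} (hA : MeasurableSet A)
    [IsFiniteMeasure (μ.restrict A)] [IsFiniteMeasure (μ.restrict B)]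
    {J G : E → ℝ} {CJ CG : ℝ} (hJ : Measurable J) (hJC : ∀ z, ‖J z‖ ≤ CJ)
    (hJs : ∀ z, J (-z) = J z) (hG : Measurable G) (hGC : ∀ z, ‖G z‖ ≤ CG)
    (hGs : ∀ z, G (-z) = G z) {u v L : E → ℝ} {D : ℝ}
    (hu : MemLp u 2 (μ.restrict A)) (hv : MemLp v 2 (μ.restrict B))
    (hEll : ∀ x ∈ A, 0 = L x + ∫ y in B, J (x - y) * (v y - u x) ∂μ)
    (hGreen : ∫ x in A, L x * u x ∂μ = -D) :
    ∫ x in B, v x * ((∫ y in B, G (x - y) * (v y - v x) ∂μ) +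
        ∫ y in A, J (x - y) * (u y - v x) ∂μ) ∂μ =
      -D - (1 / 2) * (∫ x in B, ∫ y in B, G (x - y) * (v x - v y) ^ 2 ∂μ ∂μ)
        - ∫ x in A, ∫ y in B, J (x - y) * (u x - v y) ^ 2 ∂μ ∂μ := by
  have hD : ∫ x in A, u x * ∫ y in B, J (x - y) * (v y - u x) ∂μ ∂μ = D := by
    rw [← neg_neg D, ← hGreen, ← integral_neg]
    refine setIntegral_congr_fun hA fun x hx => ?_
    rw [eq_neg_of_add_eq_zero_left (hEll x hx).symm]
    ring
  simp_rw [mul_add]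
  rw [integral_add (integrable_mul_integral hG hGC hv hv) (integrable_mul_integral hJ hJC hv hu),
    integral_mul_integral_self hG hGC hGs hv]
  linarith [integral_mul_integral_add_swap hJ hJC hJs hu hv]

end NonlocalKernel

section Rayleigh

variable {F : Type*} [NormedAddCommGroup F] [InnerProductSpace ℝ F] [CompleteSpace F]

theorem norm_gradient_const_mul (a : ℝ) (u : F → ℝ) (x : F) :
    ‖gradient (fun z => a * u z) x‖ = |a| * ‖gradient u x‖ := by
  have h : fderiv ℝ (fun z => a * u z) x = a • fderiv ℝ u x :=
    congrFun (fderiv_const_smul_field (f := u) a) x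
  simp only [gradient, h, map_smul, norm_smul, Real.norm_eq_abs]

variable [MeasureSpace F] {A B : Set F} {J G : F → ℝ}

noncomputable def rayleighEnergy (A B : Set F) (J G u v : F → ℝ) : ℝ :=
  (1 / 2) * (∫ x in A, ‖gradient u x‖ ^ 2)
    + (1 / 4) * (∫ x in B, ∫ y in B, G (x - y) * (v x - v y) ^ 2)
    + (1 / 2) * (∫ x in A, ∫ y in B, J (x - y) * (v y - u x) ^ 2)

/-- The set whose infimum is `λ₁`. -/
def normalizedEnergies (A B : Set F) (J G : F → ℝ) : Set ℝ :=
  {e : ℝ | ∃ u' v' : F → ℝ,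
    MemLp u' 2 (volume.restrict A) ∧
    (∀ x ∈ A, DifferentiableAt ℝ u' x) ∧
    MemLp (fun x => ‖gradient u' x‖) 2 (volume.restrict A) ∧
    MemLp v' 2 (volume.restrict B) ∧
    (∫ x in B, (v' x) ^ 2) = 1 ∧ (∫ x in B, v' x) = 0 ∧
    e = rayleighEnergy A B J G u' v'}

theorem two_mul_rayleighEnergy (u v : F → ℝ) :
    2 * rayleighEnergy A B J G u v =
      (∫ x in A, ‖gradient u x‖ ^ 2)
        + (1 / 2) * (∫ x in B, ∫ y in B, G (x - y) * (v x - v y) ^ 2)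
        + ∫ x in A, ∫ y in B, J (x - y) * (u x - v y) ^ 2 := by
  simp_rw [rayleighEnergy, sub_sq_comm (v _) (u _)]
  ring

theorem rayleighEnergy_nonneg (hJ0 : ∀ z, 0 ≤ J z) (hG0 : ∀ z, 0 ≤ G z) (u v : F → ℝ) :
    0 ≤ rayleighEnergy A B J G u v := by
  have h₁ : 0 ≤ ∫ x in A, ‖gradient u x‖ ^ 2 := integral_nonneg fun x => by positivity
  have h₂ : 0 ≤ ∫ x in B, ∫ y in B, G (x - y) * (v x - v y) ^ 2 :=
    integral_nonneg fun x => integral_nonneg fun y => mul_nonneg (hG0 _) (sq_nonneg _)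
  have h₃ : 0 ≤ ∫ x in A, ∫ y in B, J (x - y) * (v y - u x) ^ 2 :=
    integral_nonneg fun x => integral_nonneg fun y => mul_nonneg (hJ0 _) (sq_nonneg _)
  unfold rayleighEnergy
  positivity

theorem rayleighEnergy_const_mul (a : ℝ) (u v : F → ℝ) :
    rayleighEnergy A B J G (fun x => a * u x) (fun x => a * v x) =
      a ^ 2 * rayleighEnergy A B J G u v := by
  have hG : ∀ x y, G (x - y) * (a * v x - a * v y) ^ 2 = a ^ 2 * (G (x - y) * (v x - v y) ^ 2) :=
    fun x y => by ring
  have hJ : ∀ x y, J (x - y) * (a * v y - a * u x) ^ 2 = a ^ 2 * (J (x - y) * (v y - u x) ^ 2) :=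
    fun x y => by ring
  simp_rw [rayleighEnergy, norm_gradient_const_mul, mul_pow, sq_abs, hG, hJ, integral_const_mul]
  ring

theorem sInf_normalizedEnergies_mul_le (hJ0 : ∀ z, 0 ≤ J z) (hG0 : ∀ z, 0 ≤ G z) {u v : F → ℝ}
    (hu : MemLp u 2 (volume.restrict A)) (hdiff : ∀ x ∈ A, DifferentiableAt ℝ u x)
    (hgrad : MemLp (fun x => ‖gradient u x‖) 2 (volume.restrict A))
    (hv : MemLp v 2 (volume.restrict B)) (hmean : ∫ x in B, v x = 0) :
    sInf (normalizedEnergies A B J G) * ∫ x in B, v x ^ 2 ≤ rayleighEnergy A B J G u v := by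
  have hbdd : BddBelow (normalizedEnergies A B J G) :=
    ⟨0, by rintro _ ⟨u', v', -, -, -, -, -, -, rfl⟩; exact rayleighEnergy_nonneg hJ0 hG0 u' v'⟩
  rcases (integral_nonneg fun x => sq_nonneg (v x) : 0 ≤ ∫ x in B, v x ^ 2).eq_or_lt
    with hzero | hpos
  · rw [← hzero, mul_zero]
    exact rayleighEnergy_nonneg hJ0 hG0 u v
  set a := (√(∫ x in B, v x ^ 2))⁻¹
  have ha : a ^ 2 * ∫ x in B, v x ^ 2 = 1 := by
    rw [inv_pow, Real.sq_sqrt hpos.le, inv_mul_cancel₀ hpos.ne']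
  have hmem : rayleighEnergy A B J G (fun x => a * u x) (fun x => a * v x) ∈
      normalizedEnergies A B J G := by
    refine ⟨_, _, hu.const_mul a, fun x hx => (hdiff x hx).const_mul a, ?_, hv.const_mul a,
      ?_, ?_, rfl⟩
    · simpa only [norm_gradient_const_mul] using hgrad.const_mul |a|
    · simpa only [mul_pow, integral_const_mul] using ha
    · rw [integral_const_mul, hmean, mul_zero]
  calc sInf (normalizedEnergies A B J G) * ∫ x in B, v x ^ 2
      ≤ a ^ 2 * rayleighEnergy A B J G u v * ∫ x in B, v x ^ 2 := by
        gcongr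
        rw [← rayleighEnergy_const_mul]
        exact csInf_le hbdd hmem
    _ = rayleighEnergy A B J G u v := by linear_combination rayleighEnergy A B J G u v * ha

end Rayleigh

theorem le_exp_mul_of_hasDerivAt_le {y y' : ℝ → ℝ} {c : ℝ}
    (hy : ∀ t, 0 ≤ t → HasDerivAt y (y' t) t) (hle : ∀ t, 0 ≤ t → y' t ≤ -c * y t)
    {t : ℝ} (ht : 0 ≤ t) : y t ≤ Real.exp (-c * t) * y 0 := by
  have hΦ : ∀ s, 0 ≤ s → HasDerivAt (fun r => y r * Real.exp (c * r))
      (y' s * Real.exp (c * s) + y s * (Real.exp (c * s) * c)) s := fun s hs =>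
    (hy s hs).mul (by simpa using ((hasDerivAt_id s).const_mul c).exp)
  have hanti : AntitoneOn (fun r => y r * Real.exp (c * r)) (Set.Ici 0) := by
    refine antitoneOn_of_hasDerivWithinAt_nonpos (convex_Ici 0)
      (f' := fun s => y' s * Real.exp (c * s) + y s * (Real.exp (c * s) * c))
      (fun s hs => (hΦ s hs).continuousAt.continuousWithinAt) (fun s hs => ?_) fun s hs => ?_
    all_goals rw [interior_Ici] at hs
    · exact (hΦ s hs.out.le).hasDerivWithinAt
    · nlinarith [hle s hs.out.le, Real.exp_pos (c * s)]
  have h := hanti Set.self_mem_Ici (Set.mem_Ici.mpr ht) ht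
  simp only [mul_zero, Real.exp_zero, mul_one] at h
  calc y t = y t * Real.exp (c * t) * Real.exp (-c * t) := by
        rw [mul_assoc, ← Real.exp_add, neg_mul, add_neg_cancel, Real.exp_zero, mul_one]
    _ ≤ Real.exp (-c * t) * y 0 := by
        rw [mul_comm]
        exact mul_le_mul_of_nonneg_left h (Real.exp_pos _).le

theorem stmt_17_general {N : ℕ} (A B : Set (EuclideanSpace ℝ (Fin N)))
    (hAo : IsOpen A) (hAb : Bornology.IsBounded A)
    (hBb : Bornology.IsBounded B)
    (J G : EuclideanSpace ℝ (Fin N) → ℝ)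
    (hJc : Continuous J) (hGc : Continuous G)
    (hJ0 : ∀ z, 0 ≤ J z) (hG0 : ∀ z, 0 ≤ G z)
    (hJbd : ∃ C, ∀ z, J z ≤ C) (hGbd : ∃ C, ∀ z, G z ≤ C)
    (hJs : ∀ z, J (-z) = J z) (hGs : ∀ z, G (-z) = G z)
    (u v L : EuclideanSpace ℝ (Fin N) → ℝ → ℝ)
    (huL2 : ∀ t, 0 ≤ t → MemLp (fun x => u x t) 2 (volume.restrict A))
    (hudiff : ∀ t, 0 ≤ t → ∀ x ∈ A, DifferentiableAt ℝ (fun z => u z t) x)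
    (hugrad : ∀ t, 0 ≤ t →
      MemLp (fun x => ‖gradient (fun z => u z t) x‖) 2 (volume.restrict A))
    (hvL2 : ∀ t, 0 ≤ t → MemLp (fun x => v x t) 2 (volume.restrict B))
    (hmean : ∀ t, 0 ≤ t → (∫ x in B, v x t) = 0)
    (hEll : ∀ t, 0 ≤ t → ∀ x ∈ A,
      0 = L x t + ∫ y in B, J (x - y) * (v y t - u x t))
    (hGreen : ∀ t, 0 ≤ t →
      (∫ x in A, L x t * u x t) = -(∫ x in A, ‖gradient (fun z => u z t) x‖ ^ 2))
    (hDint : ∀ t, 0 ≤ t →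
      HasDerivAt (fun s => ∫ x in B, (v x s) ^ 2 / 2)
        (∫ x in B, v x t * ((∫ y in B, G (x - y) * (v y t - v x t))
          + ∫ y in A, J (x - y) * (u y t - v x t))) t) :
    (∀ t, 0 ≤ t →
      HasDerivAt (fun s => ∫ x in B, (v x s) ^ 2 / 2)
        (-(∫ x in A, ‖gradient (fun z => u z t) x‖ ^ 2)
          - (1 / 2) * (∫ x in B, ∫ y in B, G (x - y) * (v x t - v y t) ^ 2)
          - ∫ x in A, ∫ y in B, J (x - y) * (u x t - v y t) ^ 2) t) ∧
    (0 < sInf {E : ℝ | ∃ u' v' : EuclideanSpace ℝ (Fin N) → ℝ,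
        MemLp u' 2 (volume.restrict A) ∧
        (∀ x ∈ A, DifferentiableAt ℝ u' x) ∧
        MemLp (fun x => ‖gradient u' x‖) 2 (volume.restrict A) ∧
        MemLp v' 2 (volume.restrict B) ∧
        (∫ x in B, (v' x) ^ 2) = 1 ∧ (∫ x in B, v' x) = 0 ∧
        E = (1 / 2) * (∫ x in A, ‖gradient u' x‖ ^ 2)
          + (1 / 4) * (∫ x in B, ∫ y in B, G (x - y) * (v' x - v' y) ^ 2)
          + (1 / 2) * (∫ x in A, ∫ y in B, J (x - y) * (v' y - u' x) ^ 2)} →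
      ∀ t, 0 ≤ t →
        Real.sqrt (∫ x in B, (v x t) ^ 2) ≤
          Real.exp (-(sInf {E : ℝ | ∃ u' v' : EuclideanSpace ℝ (Fin N) → ℝ,
            MemLp u' 2 (volume.restrict A) ∧
            (∀ x ∈ A, DifferentiableAt ℝ u' x) ∧
            MemLp (fun x => ‖gradient u' x‖) 2 (volume.restrict A) ∧
            MemLp v' 2 (volume.restrict B) ∧
            (∫ x in B, (v' x) ^ 2) = 1 ∧ (∫ x in B, v' x) = 0 ∧
            E = (1 / 2) * (∫ x in A, ‖gradient u' x‖ ^ 2)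
              + (1 / 4) * (∫ x in B, ∫ y in B, G (x - y) * (v' x - v' y) ^ 2)
              + (1 / 2) * (∫ x in A, ∫ y in B, J (x - y) * (v' y - u' x) ^ 2)}) * t / 2) *
            Real.sqrt (∫ x in B, (v x 0) ^ 2)) := by
  have : IsFiniteMeasure (volume.restrict A) :=
    isFiniteMeasure_restrict.mpr hAb.measure_lt_top.ne
  have : IsFiniteMeasure (volume.restrict B) :=
    isFiniteMeasure_restrict.mpr hBb.measure_lt_top.ne
  obtain ⟨CJ, hCJ⟩ := hJbd
  obtain ⟨CG, hCG⟩ := hGbd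
  have hJC : ∀ z, ‖J z‖ ≤ CJ := fun z => (Real.norm_of_nonneg (hJ0 z)).trans_le (hCJ z)
  have hGC : ∀ z, ‖G z‖ ≤ CG := fun z => (Real.norm_of_nonneg (hG0 z)).trans_le (hCG z)
  have hdiss : ∀ t, 0 ≤ t → HasDerivAt (fun s => ∫ x in B, (v x s) ^ 2 / 2)
      (-(∫ x in A, ‖gradient (fun z => u z t) x‖ ^ 2)
        - (1 / 2) * (∫ x in B, ∫ y in B, G (x - y) * (v x t - v y t) ^ 2)
        - ∫ x in A, ∫ y in B, J (x - y) * (u x t - v y t) ^ 2) t := fun t ht =>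
    (hDint t ht).congr_deriv <| NonlocalKernel.integral_mul_flux_eq_neg_dissipation
      hAo.measurableSet hJc.measurable hJC hJs hGc.measurable hGC hGs (huL2 t ht) (hvL2 t ht) (hEll t ht)
      (hGreen t ht)
  refine ⟨hdiss, fun hpos t ht => ?_⟩
  change 0 < sInf (normalizedEnergies A B J G) at hpos
  change _ ≤ Real.exp (-sInf (normalizedEnergies A B J G) * t / 2) * _
  set Λ := sInf (normalizedEnergies A B J G)
  have hdecay := le_exp_mul_of_hasDerivAt_le (c := Λ) hdiss (fun s hs => by
    have hR := sInf_normalizedEnergies_mul_le hJ0 hG0 (huL2 s hs) (hudiff s hs) (hugrad s hs)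
      (hvL2 s hs) (hmean s hs)
    have h2R := two_mul_rayleighEnergy (A := A) (B := B) (J := J) (G := G)
      (fun x => u x s) (fun x => v x s)
    have hI : 0 ≤ ∫ x in B, v x s ^ 2 := integral_nonneg fun x => sq_nonneg _
    rw [integral_div]
    linarith [mul_nonneg hpos.le hI]) ht
  rw [integral_div, integral_div] at hdecay
  calc √(∫ x in B, v x t ^ 2)
      ≤ √(Real.exp (-Λ * t) * ∫ x in B, v x 0 ^ 2) := Real.sqrt_le_sqrt (by linarith)
    _ = Real.exp (-Λ * t / 2) * √(∫ x in B, v x 0 ^ 2) := by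
      rw [Real.sqrt_mul (Real.exp_pos _).le, ← Real.exp_half]

/-- Energy identity and exponential decay for the elliptic–parabolic system (mean-zero
initial data): for a smooth solution `(u, v)` (with `L = Δu`, the Neumann boundary
condition and Green's identity encoded in `hGreen`, and differentiation under the
integral sign encoded in `hDint`),
`d/dt ∫_B v²/2 = -∫_A |∇u|² - (1/2)∬_{B×B} G(x-y)(v(x)-v(y))² - ∬_{A×B} J(x-y)(u(x)-v(y))²`,
and if the eigenvalue `λ₁` (the infimum of the energy over admissible normalized mean-zero
pairs) is positive, then `‖v(·,t)‖_{L²(B)} ≤ e^{-λ₁ t / 2} ‖v₀‖_{L²(B)}` for all `t ≥ 0`. -/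
theorem stmt_17 {N : ℕ} (A B : Set (EuclideanSpace ℝ (Fin N)))
    (hAo : IsOpen A) (hAb : Bornology.IsBounded A)
    (hBm : MeasurableSet B) (hBc : IsConnected B) (hBb : Bornology.IsBounded B)
    (J G : EuclideanSpace ℝ (Fin N) → ℝ)
    (hJc : Continuous J) (hGc : Continuous G)
    (hJ0 : ∀ z, 0 ≤ J z) (hG0 : ∀ z, 0 ≤ G z)
    (hJbd : ∃ C, ∀ z, J z ≤ C) (hGbd : ∃ C, ∀ z, G z ≤ C)
    (hJs : ∀ z, J (-z) = J z) (hGs : ∀ z, G (-z) = G z)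
    (u v L : EuclideanSpace ℝ (Fin N) → ℝ → ℝ)
    (huL2 : ∀ t, 0 ≤ t → MemLp (fun x => u x t) 2 (volume.restrict A))
    (hudiff : ∀ t, 0 ≤ t → ∀ x ∈ A, DifferentiableAt ℝ (fun z => u z t) x)
    (hugrad : ∀ t, 0 ≤ t →
      MemLp (fun x => ‖gradient (fun z => u z t) x‖) 2 (volume.restrict A))
    (hvL2 : ∀ t, 0 ≤ t → MemLp (fun x => v x t) 2 (volume.restrict B))
    (hmean : ∀ t, 0 ≤ t → (∫ x in B, v x t) = 0)
    (hPDE : ∀ x ∈ B, ∀ t, 0 ≤ t →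
      HasDerivAt (v x)
        ((∫ y in B, G (x - y) * (v y t - v x t)) + ∫ y in A, J (x - y) * (u y t - v x t)) t)
    (hEll : ∀ t, 0 ≤ t → ∀ x ∈ A,
      0 = L x t + ∫ y in B, J (x - y) * (v y t - u x t))
    (hGreen : ∀ t, 0 ≤ t →
      (∫ x in A, L x t * u x t) = -(∫ x in A, ‖gradient (fun z => u z t) x‖ ^ 2))
    (hDint : ∀ t, 0 ≤ t →
      HasDerivAt (fun s => ∫ x in B, (v x s) ^ 2 / 2)
        (∫ x in B, v x t * ((∫ y in B, G (x - y) * (v y t - v x t))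
          + ∫ y in A, J (x - y) * (u y t - v x t))) t) :
    (∀ t, 0 ≤ t →
      HasDerivAt (fun s => ∫ x in B, (v x s) ^ 2 / 2)
        (-(∫ x in A, ‖gradient (fun z => u z t) x‖ ^ 2)
          - (1 / 2) * (∫ x in B, ∫ y in B, G (x - y) * (v x t - v y t) ^ 2)
          - ∫ x in A, ∫ y in B, J (x - y) * (u x t - v y t) ^ 2) t) ∧
    (0 < sInf {E : ℝ | ∃ u' v' : EuclideanSpace ℝ (Fin N) → ℝ,
        MemLp u' 2 (volume.restrict A) ∧
        (∀ x ∈ A, DifferentiableAt ℝ u' x) ∧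
        MemLp (fun x => ‖gradient u' x‖) 2 (volume.restrict A) ∧
        MemLp v' 2 (volume.restrict B) ∧
        (∫ x in B, (v' x) ^ 2) = 1 ∧ (∫ x in B, v' x) = 0 ∧
        E = (1 / 2) * (∫ x in A, ‖gradient u' x‖ ^ 2)
          + (1 / 4) * (∫ x in B, ∫ y in B, G (x - y) * (v' x - v' y) ^ 2)
          + (1 / 2) * (∫ x in A, ∫ y in B, J (x - y) * (v' y - u' x) ^ 2)} →
      ∀ t, 0 ≤ t →
        Real.sqrt (∫ x in B, (v x t) ^ 2) ≤
          Real.exp (-(sInf {E : ℝ | ∃ u' v' : EuclideanSpace ℝ (Fin N) → ℝ,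
            MemLp u' 2 (volume.restrict A) ∧
            (∀ x ∈ A, DifferentiableAt ℝ u' x) ∧
            MemLp (fun x => ‖gradient u' x‖) 2 (volume.restrict A) ∧
            MemLp v' 2 (volume.restrict B) ∧
            (∫ x in B, (v' x) ^ 2) = 1 ∧ (∫ x in B, v' x) = 0 ∧
            E = (1 / 2) * (∫ x in A, ‖gradient u' x‖ ^ 2)
              + (1 / 4) * (∫ x in B, ∫ y in B, G (x - y) * (v' x - v' y) ^ 2)
              + (1 / 2) * (∫ x in A, ∫ y in B, J (x - y) * (v' y - u' x) ^ 2)}) * t / 2) *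
            Real.sqrt (∫ x in B, (v x 0) ^ 2)) :=
  stmt_17_general A B hAo hAb hBb J G hJc hGc hJ0 hG0 hJbd hGbd hJs hGs u v L huL2 hudiff hugrad
    hvL2 hmean hEll hGreen hDint
end
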